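/- arXiv:1605.04524 — 8 statements merged into one kernel-verified Lean document; each statement's English description precedes it below -/
import Mathlib

section
/- Let H be an M×K complex matrix with HᴴH invertible, u ∈ ℂ^K, and γ, P_a > 0. Set b = √γ · H(HᴴH)⁻¹u and, for δ > 0, x_δ = (HHᴴ + δ I_M)⁻¹ HHᴴ b. If δ > 0 is such that x_δᴴ x_δ = P_a, then x_δ minimizes φ(x) = ‖Hᴴx − √γ u‖² over the ball {x ∈ ℂ^M : xᴴx ≤ P_a}; that is, for every x ∈ ℂ^M with xᴴx ≤ P_a one has ‖Hᴴx_δ − √γ u‖² ≤ ‖Hᴴx − √γ u‖². -/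
open Matrix ComplexOrder

/-- Squared Euclidean (ℓ²) norm of a complex vector. -/
noncomputable def sqNorm {n : ℕ} (v : Fin n → ℂ) : ℝ := ∑ i, ‖v i‖ ^ 2

/-- The zero-forcing vector `b = √γ · H (Hᴴ H)⁻¹ u`. -/
noncomputable def bVec {M K : ℕ} (H : Matrix (Fin M) (Fin K) ℂ) (u : Fin K → ℂ) (γ : ℝ) :
    Fin M → ℂ :=
  ((Real.sqrt γ : ℂ)) • (H * (Hᴴ * H)⁻¹).mulVec u

/-- The regularized zero-forcing vector `x_δ = (H Hᴴ + δ I)⁻¹ (H Hᴴ) b`. -/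
noncomputable def xVec {M K : ℕ} (H : Matrix (Fin M) (Fin K) ℂ) (u : Fin K → ℂ) (γ δ : ℝ) :
    Fin M → ℂ :=
  (((H * Hᴴ + (δ : ℂ) • (1 : Matrix (Fin M) (Fin M) ℂ))⁻¹) * (H * Hᴴ)).mulVec (bVec H u γ)

/-!
Put `r = Hᴴ x_δ - √γ u`. Multiplying the definition of `x_δ` by `H Hᴴ + δ I` and using
`Hᴴ b = √γ u` gives the stationarity condition `H r = -δ x_δ`, i.e. `x_δ` is a KKT point with
multiplier `δ ≥ 0`. For `x` in the ball, expanding `‖r + Hᴴ (x - x_δ)‖²` leaves, besides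
`‖r‖²` and a square, the cross term `2 Re ⟪r, Hᴴ (x - x_δ)⟫ = 2δ (‖x_δ‖² - Re ⟪x_δ, x⟫)`,
which is nonnegative by Cauchy–Schwarz because `‖x‖ ≤ ‖x_δ‖`.
-/

section LeastSquares

variable {𝕜 E F : Type*} [RCLike 𝕜] [NormedAddCommGroup E] [InnerProductSpace 𝕜 E]
  [NormedAddCommGroup F] [InnerProductSpace 𝕜 F] [FiniteDimensional 𝕜 E] [FiniteDimensional 𝕜 F]

open RCLike InnerProductSpace in
theorem norm_sub_le_of_adjoint_apply_eq_neg_smul (T : E →ₗ[𝕜] F) {c : F} {x₀ : E} {δ : ℝ}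
    (hδ : 0 ≤ δ) (hkkt : T.adjoint (T x₀ - c) = -((δ : 𝕜) • x₀)) {x : E} (hx : ‖x‖ ≤ ‖x₀‖) :
    ‖T x₀ - c‖ ≤ ‖T x - c‖ := by
  have hsplit : T x - c = (T x₀ - c) + T (x - x₀) := by rw [map_sub]; abel
  have hcross : re ⟪T x₀ - c, T (x - x₀)⟫_𝕜 = δ * (‖x₀‖ ^ 2 - re ⟪x₀, x⟫_𝕜) := by
    rw [← LinearMap.adjoint_inner_left T, hkkt, inner_neg_left, inner_smul_left, inner_sub_right,
      inner_self_eq_norm_sq_to_K]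
    simp only [conj_ofReal, map_neg, mul_re, ofReal_re, map_sub, re_ofReal_pow, ofReal_im,
      im_ofReal_pow, sub_zero, zero_mul]
    ring
  have hre : re ⟪x₀, x⟫_𝕜 ≤ ‖x₀‖ ^ 2 :=
    (re_inner_le_norm x₀ x).trans (by nlinarith [norm_nonneg x, norm_nonneg x₀])
  refine (pow_le_pow_iff_left₀ (norm_nonneg _) (norm_nonneg _) two_ne_zero).mp ?_
  rw [hsplit, norm_add_sq (𝕜 := 𝕜), hcross]
  nlinarith [norm_nonneg (T (x - x₀))]

end LeastSquares

theorem star_dotProduct_self_eq_norm_toLp_sq {𝕜 n : Type*} [RCLike 𝕜] [Fintype n] (x : n → 𝕜) :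
    star x ⬝ᵥ x = (‖WithLp.toLp 2 x‖ : 𝕜) ^ 2 := by
  rw [← inner_self_eq_norm_sq_to_K, EuclideanSpace.inner_toLp_toLp, dotProduct_comm]

theorem sqNorm_eq_norm_toLp_sq {n : ℕ} (v : Fin n → ℂ) : sqNorm v = ‖WithLp.toLp 2 v‖ ^ 2 :=
  (EuclideanSpace.norm_sq_eq _).symm

theorem mulVec_inv_add_smul_one_mul_mulVec {n R : Type*} [Fintype n] [DecidableEq n] [CommRing R]
    {A : Matrix n n R} {d : R} (hA : IsUnit (A + d • 1)) (b : n → R) :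
    A *ᵥ (((A + d • 1)⁻¹ * A) *ᵥ b) = A *ᵥ b - d • (((A + d • 1)⁻¹ * A) *ᵥ b) := by
  have h : (A + d • 1) *ᵥ (((A + d • 1)⁻¹ * A) *ᵥ b) = A *ᵥ b := by
    rw [mulVec_mulVec, ← Matrix.mul_assoc, mul_nonsing_inv _ ((isUnit_iff_isUnit_det _).mp hA),
      Matrix.one_mul]
  rw [← h, add_mulVec, smul_mulVec, one_mulVec, add_sub_cancel_right]

theorem isUnit_mul_conjTranspose_add_smul_one {m n : Type*} [Fintype m] [Fintype n] [DecidableEq m]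
    (H : Matrix m n ℂ) {δ : ℝ} (hδ : 0 < δ) : IsUnit (H * Hᴴ + (δ : ℂ) • 1) :=
  (PosDef.posSemidef_add (posSemidef_self_mul_conjTranspose H)
    (PosDef.one.smul (Complex.zero_lt_real.mpr hδ))).isUnit

theorem conjTranspose_mulVec_bVec {M K : ℕ} {H : Matrix (Fin M) (Fin K) ℂ} (hH : IsUnit (Hᴴ * H))
    (u : Fin K → ℂ) (γ : ℝ) : Hᴴ *ᵥ bVec H u γ = (Real.sqrt γ : ℂ) • u := by
  rw [bVec, mulVec_smul, mulVec_mulVec, ← Matrix.mul_assoc,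
    mul_nonsing_inv _ ((isUnit_iff_isUnit_det _).mp hH), one_mulVec]

theorem mulVec_conjTranspose_mulVec_xVec_sub {M K : ℕ} {H : Matrix (Fin M) (Fin K) ℂ} (hH : IsUnit (Hᴴ * H))
    (u : Fin K → ℂ) (γ : ℝ) {δ : ℝ} (hδ : 0 < δ) :
    H *ᵥ (Hᴴ *ᵥ xVec H u γ δ - (Real.sqrt γ : ℂ) • u) = -((δ : ℂ) • xVec H u γ δ) := by
  rw [mulVec_sub, mulVec_mulVec, xVec,
    mulVec_inv_add_smul_one_mul_mulVec (isUnit_mul_conjTranspose_add_smul_one H hδ),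
    ← mulVec_mulVec, conjTranspose_mulVec_bVec hH, sub_sub_cancel_left]

theorem stmt0_general {M K : ℕ}
    (H : Matrix (Fin M) (Fin K) ℂ) (hH : IsUnit (Hᴴ * H))
    (u : Fin K → ℂ) (γ Pa : ℝ)
    (δ : ℝ) (hδ : 0 < δ)
    (hpow : star (xVec H u γ δ) ⬝ᵥ xVec H u γ δ = (Pa : ℂ)) :
    ∀ x : Fin M → ℂ, star x ⬝ᵥ x ≤ (Pa : ℂ) →
      sqNorm (Hᴴ.mulVec (xVec H u γ δ) - (Real.sqrt γ : ℂ) • u) ≤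
        sqNorm (Hᴴ.mulVec x - (Real.sqrt γ : ℂ) • u) := by
  intro x hx
  rw [star_dotProduct_self_eq_norm_toLp_sq] at hpow hx
  have hball : ‖WithLp.toLp 2 x‖ ≤ ‖WithLp.toLp 2 (xVec H u γ δ)‖ := by
    refine (pow_le_pow_iff_left₀ (norm_nonneg _) (norm_nonneg _) two_ne_zero).mp ?_
    exact_mod_cast hpow ▸ hx
  have hkkt : (toEuclideanLin Hᴴ).adjoint
      (toEuclideanLin Hᴴ (WithLp.toLp 2 (xVec H u γ δ)) - WithLp.toLp 2 ((Real.sqrt γ : ℂ) • u)) =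
        -((δ : ℂ) • WithLp.toLp 2 (xVec H u γ δ)) := by
    rw [← toEuclideanLin_conjTranspose_eq_adjoint, conjTranspose_conjTranspose]
    exact congrArg (WithLp.toLp 2) (mulVec_conjTranspose_mulVec_xVec_sub hH u γ hδ)
  rw [sqNorm_eq_norm_toLp_sq, sqNorm_eq_norm_toLp_sq]
  gcongr
  exact norm_sub_le_of_adjoint_apply_eq_neg_smul (toEuclideanLin Hᴴ) hδ.le hkkt hball

/-- if `δ > 0` is such that `x_δᴴ x_δ = P_a`, then `x_δ` minimizes
`‖Hᴴ x − √γ u‖²` over the ball `{x : xᴴ x ≤ P_a}`. -/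
theorem stmt0 {M K : ℕ} (hM : 0 < M) (hK : 0 < K)
    (H : Matrix (Fin M) (Fin K) ℂ) (hH : IsUnit (Hᴴ * H))
    (u : Fin K → ℂ) (γ Pa : ℝ) (hγ : 0 < γ) (hPa : 0 < Pa)
    (δ : ℝ) (hδ : 0 < δ)
    (hpow : star (xVec H u γ δ) ⬝ᵥ xVec H u γ δ = (Pa : ℂ)) :
    ∀ x : Fin M → ℂ, star x ⬝ᵥ x ≤ (Pa : ℂ) →
      sqNorm (Hᴴ.mulVec (xVec H u γ δ) - (Real.sqrt γ : ℂ) • u) ≤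
        sqNorm (Hᴴ.mulVec x - (Real.sqrt γ : ℂ) • u) :=
  stmt0_general H hH u γ Pa δ hδ hpow
end

section
/- Let c ∈ (0,1) and define m(ρ) = −2 / (1 − c − ρ − √((1 − c + ρ)² + 4cρ)) for ρ > 0. Then m is differentiable on (0, ∞), and the function f̄(ρ) = m(ρ) + ρ·m′(ρ) is strictly positive and strictly decreasing on (0, ∞). Consequently, for any γ, P_a > 0 the equation γ·f̄(ρ) = P_a has at most one solution ρ > 0. -/
/-!
Rationalising the denominator of `m` gives `ρ m(ρ) = (s(ρ) + 1 - c - ρ) / 2`, where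
`s(ρ) = √((1 - c + ρ)² + 4cρ)`. Since `f̄ = (ρ m)′` and `s′ = (1 + c + ρ) / s`,
this yields the closed form `f̄(ρ) = 2c / (s (s + 1 + c + ρ))`, which is positive, and decreasing
because `s` increases with `ρ`. A strictly decreasing function is injective, so `γ f̄ = P_a` has at
most one root.
-/

/-- The Marchenko–Pastur-type Stieltjes function
`m(ρ) = −2 / (1 − c − ρ − √((1 − c + ρ)² + 4cρ))`. -/
noncomputable def mMP (c ρ : ℝ) : ℝ :=
  -2 / (1 - c - ρ - Real.sqrt ((1 - c + ρ) ^ 2 + 4 * c * ρ))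

/-- The deterministic-equivalent power profile `f̄(ρ) = m(ρ) + ρ m′(ρ)`. -/
noncomputable def fBar (c ρ : ℝ) : ℝ := mMP c ρ + ρ * deriv (mMP c) ρ

noncomputable def mpSqrt (c ρ : ℝ) : ℝ := √((1 - c + ρ) ^ 2 + 4 * c * ρ)

section

variable {c ρ : ℝ}

lemma mpDisc_pos (hc : 0 < c) (hρ : 0 < ρ) : 0 < (1 - c + ρ) ^ 2 + 4 * c * ρ := by
  positivity

lemma mpSqrt_pos (hc : 0 < c) (hρ : 0 < ρ) : 0 < mpSqrt c ρ :=
  Real.sqrt_pos.2 (mpDisc_pos hc hρ)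

lemma mpSqrt_sq (hc : 0 < c) (hρ : 0 < ρ) : mpSqrt c ρ ^ 2 = (1 - c + ρ) ^ 2 + 4 * c * ρ :=
  Real.sq_sqrt (mpDisc_pos hc hρ).le

lemma sub_lt_mpSqrt (hρ : 0 < ρ) : 1 - c - ρ < mpSqrt c ρ :=
  Real.lt_sqrt_of_sq_lt (by nlinarith)

lemma strictMonoOn_mpSqrt (hc : 0 < c) : StrictMonoOn (mpSqrt c) (Set.Ioi 0) :=
  fun _ hρ₁ _ _ hlt => Real.sqrt_lt_sqrt (mpDisc_pos hc hρ₁).le (by nlinarith [hρ₁.out])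

lemma hasDerivAt_mpSqrt (hc : 0 < c) (hρ : 0 < ρ) :
    HasDerivAt (mpSqrt c) ((1 + c + ρ) / mpSqrt c ρ) ρ := by
  have hdisc : HasDerivAt (fun x => (1 - c + x) ^ 2 + 4 * c * x) (2 * (1 + c + ρ)) ρ := by
    refine ((((hasDerivAt_id' ρ).const_add (1 - c)).pow 2).add
      ((hasDerivAt_id' ρ).const_mul (4 * c))).congr_deriv ?_
    ring
  refine (hdisc.sqrt (mpDisc_pos hc hρ).ne').congr_deriv ?_
  exact mul_div_mul_left _ _ two_ne_zero

lemma differentiableAt_mMP (hc : 0 < c) (hρ : 0 < ρ) : DifferentiableAt ℝ (mMP c) ρ :=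
  show DifferentiableAt ℝ (fun x => -2 / (1 - c - x - mpSqrt c x)) ρ from
  (differentiableAt_const _).div
    (((differentiableAt_const _).sub differentiableAt_fun_id).sub
      (hasDerivAt_mpSqrt hc hρ).differentiableAt)
    (sub_neg.2 (sub_lt_mpSqrt hρ)).ne

lemma mul_mMP (hc : 0 < c) (hρ : 0 < ρ) : ρ * mMP c ρ = (mpSqrt c ρ + 1 - c - ρ) / 2 := by
  have hden : 1 - c - ρ - mpSqrt c ρ ≠ 0 := by linarith [sub_lt_mpSqrt (c := c) hρ]
  rw [mMP, ← mpSqrt]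
  field_simp
  linear_combination mpSqrt_sq hc hρ

lemma fBar_eq (hc : 0 < c) (hρ : 0 < ρ) :
    fBar c ρ = 2 * c / (mpSqrt c ρ * (mpSqrt c ρ + 1 + c + ρ)) := by
  have hs := mpSqrt_pos hc hρ
  -- `f̄ = (ρ m)′`, computed once by the product rule and once from `mul_mMP`
  have hprod := (hasDerivAt_id ρ).mul (differentiableAt_mMP hc hρ).hasDerivAt
  have hclosed : HasDerivAt (fun x => x * mMP c x) (((1 + c + ρ) / mpSqrt c ρ - 1) / 2) ρ := by
    refine HasDerivAt.congr_of_eventuallyEq ?_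
      (Filter.eventually_of_mem (Ioi_mem_nhds hρ) fun x hx => mul_mMP hc hx)
    exact ((((hasDerivAt_mpSqrt hc hρ).add_const 1).sub_const c).sub (hasDerivAt_id ρ)).div_const 2
  have h := hprod.unique hclosed
  simp only [id_eq, one_mul] at h
  rw [fBar, h]
  field_simp
  linear_combination -mpSqrt_sq hc hρ

lemma fBar_pos (hc : 0 < c) (hρ : 0 < ρ) : 0 < fBar c ρ := by
  have := mpSqrt_pos hc hρ
  rw [fBar_eq hc hρ]
  positivity

lemma strictAntiOn_fBar (hc : 0 < c) : StrictAntiOn (fBar c) (Set.Ioi 0) := by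
  intro ρ₁ (hρ₁ : 0 < ρ₁) ρ₂ (hρ₂ : 0 < ρ₂) hlt
  have hs₁ := mpSqrt_pos hc hρ₁
  have hs := strictMonoOn_mpSqrt hc hρ₁ hρ₂ hlt
  rw [fBar_eq hc hρ₁, fBar_eq hc hρ₂]
  gcongr

end

theorem stmt7_general (c : ℝ) (hc0 : 0 < c) :
    DifferentiableOn ℝ (mMP c) (Set.Ioi 0) ∧
    (∀ ρ ∈ Set.Ioi (0 : ℝ), 0 < fBar c ρ) ∧
    StrictAntiOn (fBar c) (Set.Ioi 0) ∧
    ∀ γ Pa : ℝ, 0 < γ → 0 < Pa →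
      ∀ ρ₁ ∈ Set.Ioi (0 : ℝ), ∀ ρ₂ ∈ Set.Ioi (0 : ℝ),
        γ * fBar c ρ₁ = Pa → γ * fBar c ρ₂ = Pa → ρ₁ = ρ₂ := by
  refine ⟨fun ρ hρ => (differentiableAt_mMP hc0 hρ).differentiableWithinAt,
    fun ρ hρ => fBar_pos hc0 hρ, strictAntiOn_fBar hc0, ?_⟩
  intro γ Pa hγ _ ρ₁ hρ₁ ρ₂ hρ₂ h₁ h₂
  exact (strictAntiOn_fBar hc0).injOn hρ₁ hρ₂ (mul_left_cancel₀ hγ.ne' (h₁.trans h₂.symm))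

/-- for `c ∈ (0,1)`, `m` is differentiable on `(0,∞)`, `f̄ = m + ρ m′` is
strictly positive and strictly decreasing on `(0,∞)`, and hence for any `γ, P_a > 0` the
equation `γ f̄(ρ) = P_a` has at most one solution `ρ > 0`. -/
theorem stmt7 (c : ℝ) (hc0 : 0 < c) (hc1 : c < 1) :
    DifferentiableOn ℝ (mMP c) (Set.Ioi 0) ∧
    (∀ ρ ∈ Set.Ioi (0 : ℝ), 0 < fBar c ρ) ∧
    StrictAntiOn (fBar c) (Set.Ioi 0) ∧
    ∀ γ Pa : ℝ, 0 < γ → 0 < Pa →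
      ∀ ρ₁ ∈ Set.Ioi (0 : ℝ), ∀ ρ₂ ∈ Set.Ioi (0 : ℝ),
        γ * fBar c ρ₁ = Pa → γ * fBar c ρ₂ = Pa → ρ₁ = ρ₂ :=
  stmt7_general c hc0
end

section
/- Let c ∈ (0,1), σ² > 0 and P_a > 0, and define m(ρ) = −2 / (1 − c − ρ − √((1 − c + ρ)² + 4cρ)) and g(ρ) = −ρ²·m′(ρ) + (σ²/P_a)·(m(ρ) + ρ·m′(ρ)) for ρ > 0. Then g is differentiable at ρ = σ²/P_a with g′(σ²/P_a) = 0, and ρ* = σ²/P_a is a global minimizer of g on (0, ∞); equivalently, the deterministic-equivalent SINR, SINR̄(ρ) = 1/g(ρ), is maximized over (0, ∞) at ρ* = σ²/P_a. -/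
/-- The reciprocal of the deterministic-equivalent SINR in the uncorrelated case:
`g(ρ) = −ρ² m′(ρ) + (σ²/P_a)(m(ρ) + ρ m′(ρ))`. -/
noncomputable def gSINR (c σ2 Pa ρ : ℝ) : ℝ :=
  -(ρ ^ 2) * deriv (mMP c) ρ + (σ2 / Pa) * (mMP c ρ + ρ * deriv (mMP c) ρ)

/-!
With `s = √((1 - c + ρ)² + 4cρ)`, rationalising the denominator gives `2ρ m = s - (ρ + c - 1)`
for `ρ > 0`, hence `m' = -m (1 + m) / s` and
`2 m' + ρ m'' = m (1 + m) / s³ · ((1 - c) s + ρ (ρ + c + 1) - s²)`.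
Since `s² = ρ² + 2(1 + c)ρ + (1 - c)²`, the bracket is negative iff
`(1 - c) s < (1 + c) ρ + (1 - c)²`, and squaring leaves the margin `4cρ²`.
As `g' = (σ²/P_a - ρ) (2 m' + ρ m'')`, `g` decreases on `(0, ρ*]` and increases on `[ρ*, ∞)`;
finally `g(ρ*) = ρ* m(ρ*) > 0`, so `1/g` is maximal at `ρ*`.
-/

open Set Filter Topology

lemma hasDerivAt_neg_sq_mul_deriv_add {f : ℝ → ℝ} {x : ℝ} (r : ℝ)
    (hf : ∀ᶠ y in 𝓝 x, DifferentiableAt ℝ f y) (hf' : DifferentiableAt ℝ (deriv f) x) :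
    HasDerivAt (fun y => -(y ^ 2) * deriv f y + r * (f y + y * deriv f y))
      ((r - x) * (2 * deriv f x + x * deriv (deriv f) x)) x := by
  have hd := hf'.hasDerivAt
  have h := ((hasDerivAt_pow 2 x).fun_neg.fun_mul hd).fun_add
    ((hf.self_of_nhds.hasDerivAt.fun_add ((hasDerivAt_id' x).fun_mul hd)).const_mul r)
  exact h.congr_deriv (by ring)

noncomputable def mpRoot (c ρ : ℝ) : ℝ := √((1 - c + ρ) ^ 2 + 4 * c * ρ)

section MarchenkoPastur

variable {c ρ : ℝ}

lemma mpRoot_sq (hρ : 0 ≤ ρ) : mpRoot c ρ ^ 2 = (ρ + c - 1) ^ 2 + 4 * ρ := by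
  rw [mpRoot, Real.sq_sqrt (by nlinarith [sq_nonneg (ρ + c - 1)])]
  ring

lemma mpRoot_pos (hρ : 0 < ρ) : 0 < mpRoot c ρ :=
  Real.sqrt_pos.2 (by nlinarith [sq_nonneg (ρ + c - 1)])

lemma lt_mpRoot (hρ : 0 < ρ) : ρ + c - 1 < mpRoot c ρ := by
  nlinarith [mpRoot_sq (c := c) hρ.le, mpRoot_pos (c := c) hρ]

lemma two_mul_mul_mMP (hρ : 0 < ρ) : 2 * ρ * mMP c ρ = mpRoot c ρ - (ρ + c - 1) := by
  have hs := mpRoot_sq (c := c) hρ.le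
  have hu : 0 < mpRoot c ρ + (ρ + c - 1) := by nlinarith [mpRoot_pos (c := c) hρ]
  rw [mMP, ← mpRoot, mul_div_assoc', div_eq_iff (by linarith)]
  linear_combination hs

lemma mMP_pos (hρ : 0 < ρ) : 0 < mMP c ρ := by
  have h := two_mul_mul_mMP (c := c) hρ
  have := lt_mpRoot (c := c) hρ
  nlinarith

lemma hasDerivAt_mpRoot (hρ : 0 < ρ) : HasDerivAt (mpRoot c) ((ρ + c + 1) / mpRoot c ρ) ρ := by
  have hq := (((hasDerivAt_id' ρ).const_add (1 - c)).fun_pow 2).fun_add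
    ((hasDerivAt_id' ρ).const_mul (4 * c))
  have hs := mpRoot_pos (c := c) hρ
  refine (hq.sqrt (Real.sqrt_pos.1 hs).ne').congr_deriv ?_
  unfold mpRoot
  field_simp
  ring

noncomputable def mMPDeriv (c ρ : ℝ) : ℝ := -(mMP c ρ * (1 + mMP c ρ)) / mpRoot c ρ

lemma hasDerivAt_mMP (hρ : 0 < ρ) : HasDerivAt (mMP c) (mMPDeriv c ρ) ρ := by
  have heq : (fun x => (mpRoot c x - (x + c - 1)) / (2 * x)) =ᶠ[𝓝 ρ] mMP c := by
    filter_upwards [Ioi_mem_nhds hρ] with x hx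
    rw [← two_mul_mul_mMP hx]
    field_simp [(show (0 : ℝ) < x from hx).ne']
  refine HasDerivAt.congr_of_eventuallyEq ?_ heq.symm
  have h := ((hasDerivAt_mpRoot (c := c) hρ).fun_sub
    (((hasDerivAt_id' ρ).add_const c).sub_const 1)).fun_div
    ((hasDerivAt_id' ρ).const_mul 2) (by positivity)
  refine h.congr_deriv ?_
  have hs := mpRoot_sq (c := c) hρ.le
  have hs0 := (mpRoot_pos (c := c) hρ).ne'
  have hm : mMP c ρ = (mpRoot c ρ - (ρ + c - 1)) / (2 * ρ) := by
    rw [← two_mul_mul_mMP hρ]; field_simp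
  rw [mMPDeriv, hm]
  field_simp
  linear_combination (-1) * hs

lemma hasDerivAt_deriv_mMP (hρ : 0 < ρ) :
    HasDerivAt (deriv (mMP c))
      (mMP c ρ * (1 + mMP c ρ) * ((1 + 2 * mMP c ρ) * mpRoot c ρ + (ρ + c + 1)) / mpRoot c ρ ^ 3)
      ρ := by
  have hderiv : mMPDeriv c =ᶠ[𝓝 ρ] deriv (mMP c) := by
    filter_upwards [Ioi_mem_nhds hρ] with x hx using (hasDerivAt_mMP hx).deriv.symm
  refine HasDerivAt.congr_of_eventuallyEq ?_ hderiv.symm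
  have hm := hasDerivAt_mMP (c := c) hρ
  have hs0 := (mpRoot_pos (c := c) hρ).ne'
  have h := ((hm.fun_mul (hm.const_add 1)).fun_neg).fun_div (hasDerivAt_mpRoot hρ) hs0
  refine h.congr_deriv ?_
  rw [mMPDeriv]
  field_simp
  ring

lemma one_sub_mul_mpRoot_add_lt (hc : 0 < c) (hρ : 0 < ρ) :
    (1 - c) * mpRoot c ρ + ρ * (ρ + c + 1) < mpRoot c ρ ^ 2 := by
  have hs := mpRoot_sq (c := c) hρ.le
  have hs0 := mpRoot_pos (c := c) hρ
  suffices (1 - c) * mpRoot c ρ < ρ * (1 + c) + (1 - c) ^ 2 by nlinarith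
  rcases le_or_gt 1 c with hc1 | hc1
  · nlinarith
  · have hsq : ((1 - c) * mpRoot c ρ) ^ 2 < (ρ * (1 + c) + (1 - c) ^ 2) ^ 2 := by
      rw [mul_pow, hs]
      nlinarith [mul_pos hc (pow_pos hρ 2)]
    exact lt_of_pow_lt_pow_left₀ 2 (by positivity) hsq

lemma two_mul_deriv_mMP_add_mul_deriv_deriv_neg (hc : 0 < c) (hρ : 0 < ρ) :
    2 * deriv (mMP c) ρ + ρ * deriv (deriv (mMP c)) ρ < 0 := by
  have hm := mMP_pos (c := c) hρ
  have hs := mpRoot_pos (c := c) hρ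
  rw [(hasDerivAt_mMP hρ).deriv, (hasDerivAt_deriv_mMP hρ).deriv, mMPDeriv]
  have key : 2 * (-(mMP c ρ * (1 + mMP c ρ)) / mpRoot c ρ) + ρ * (mMP c ρ * (1 + mMP c ρ) *
      ((1 + 2 * mMP c ρ) * mpRoot c ρ + (ρ + c + 1)) / mpRoot c ρ ^ 3) =
      mMP c ρ * (1 + mMP c ρ) / mpRoot c ρ ^ 3 *
        ((1 - c) * mpRoot c ρ + ρ * (ρ + c + 1) - mpRoot c ρ ^ 2) := by
    field_simp
    linear_combination mpRoot c ρ * two_mul_mul_mMP (c := c) hρ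
  rw [key]
  exact mul_neg_of_pos_of_neg (by positivity) (by linarith [one_sub_mul_mpRoot_add_lt hc hρ])

end MarchenkoPastur

section SINR

variable {c σ2 Pa ρ : ℝ}

lemma hasDerivAt_gSINR (hρ : 0 < ρ) :
    HasDerivAt (gSINR c σ2 Pa)
      ((σ2 / Pa - ρ) * (2 * deriv (mMP c) ρ + ρ * deriv (deriv (mMP c)) ρ)) ρ :=
  hasDerivAt_neg_sq_mul_deriv_add (σ2 / Pa)
    (by filter_upwards [Ioi_mem_nhds hρ] with x hx using (hasDerivAt_mMP hx).differentiableAt)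
    (hasDerivAt_deriv_mMP hρ).differentiableAt

lemma isMinOn_gSINR (hc : 0 < c) (hr : 0 < σ2 / Pa) :
    IsMinOn (gSINR c σ2 Pa) (Ioi 0) (σ2 / Pa) := by
  have hd : ∀ x ∈ Ioi (0 : ℝ), DifferentiableAt ℝ (gSINR c σ2 Pa) x := fun x hx =>
    (hasDerivAt_gSINR hx).differentiableAt
  refine isMinOn_Ioi_of_deriv (hd _ hr).continuousAt
    (fun x hx => (hd x hx.1).differentiableWithinAt)
    (fun x hx => (hd x (hr.trans hx)).differentiableWithinAt) (fun x hx => ?_) (fun x hx => ?_)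
  · rw [(hasDerivAt_gSINR hx.1).deriv]
    exact mul_nonpos_of_nonneg_of_nonpos (sub_nonneg.2 hx.2.le)
      (two_mul_deriv_mMP_add_mul_deriv_deriv_neg hc hx.1).le
  · rw [(hasDerivAt_gSINR (hr.trans hx)).deriv]
    exact mul_nonneg_of_nonpos_of_nonpos (sub_nonpos.2 (le_of_lt hx))
      (two_mul_deriv_mMP_add_mul_deriv_deriv_neg hc (hr.trans hx)).le

lemma gSINR_self : gSINR c σ2 Pa (σ2 / Pa) = σ2 / Pa * mMP c (σ2 / Pa) := by
  unfold gSINR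
  ring

end SINR

theorem stmt9_general (c σ2 Pa : ℝ) (hc0 : 0 < c) (hσ2 : 0 < σ2) (hPa : 0 < Pa) :
    DifferentiableAt ℝ (gSINR c σ2 Pa) (σ2 / Pa) ∧
    deriv (gSINR c σ2 Pa) (σ2 / Pa) = 0 ∧
    (∀ ρ ∈ Set.Ioi (0 : ℝ), gSINR c σ2 Pa (σ2 / Pa) ≤ gSINR c σ2 Pa ρ) ∧
    (∀ ρ ∈ Set.Ioi (0 : ℝ), 1 / gSINR c σ2 Pa ρ ≤ 1 / gSINR c σ2 Pa (σ2 / Pa)) := by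
  have hr : 0 < σ2 / Pa := div_pos hσ2 hPa
  have hmin := isMinOn_iff.1 (isMinOn_gSINR hc0 hr)
  have hpos : 0 < gSINR c σ2 Pa (σ2 / Pa) := by
    rw [gSINR_self]
    exact mul_pos hr (mMP_pos hr)
  refine ⟨(hasDerivAt_gSINR hr).differentiableAt, ?_, hmin,
    fun ρ hρ => one_div_le_one_div_of_le hpos (hmin ρ hρ)⟩
  rw [(hasDerivAt_gSINR hr).deriv, sub_self, zero_mul]

/-- for `c ∈ (0,1)`, `σ² > 0`, `P_a > 0`, `g` is differentiable at
`ρ* = σ²/P_a` with `g′(ρ*) = 0`, `ρ*` is a global minimizer of `g` on `(0, ∞)`, and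
equivalently the deterministic-equivalent SINR `1/g` is maximized on `(0,∞)` at `ρ*`. -/
theorem stmt9 (c σ2 Pa : ℝ) (hc0 : 0 < c) (hc1 : c < 1) (hσ2 : 0 < σ2) (hPa : 0 < Pa) :
    DifferentiableAt ℝ (gSINR c σ2 Pa) (σ2 / Pa) ∧
    deriv (gSINR c σ2 Pa) (σ2 / Pa) = 0 ∧
    (∀ ρ ∈ Set.Ioi (0 : ℝ), gSINR c σ2 Pa (σ2 / Pa) ≤ gSINR c σ2 Pa ρ) ∧
    (∀ ρ ∈ Set.Ioi (0 : ℝ), 1 / gSINR c σ2 Pa ρ ≤ 1 / gSINR c σ2 Pa (σ2 / Pa)) :=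
  stmt9_general c σ2 Pa hc0 hσ2 hPa
end

section
/- Let R be an M×M Hermitian positive semidefinite complex matrix, K ≥ 1 an integer, and t > 0. Then there exists a unique α ≥ 0 satisfying the fixed-point equation α = (1/K)·trace( R · (I_M + (t/(1 + tα))·R)⁻¹ ), where the matrix I_M + (t/(1+tα))·R is invertible because R is positive semidefinite and t/(1+tα) ≥ 0. -/
/-!
Diagonalizing `R` by a unitary turns the trace into `∑ i, λᵢ / (1 + c λᵢ)` with `c = t / (1 + tα)`
and `λᵢ ≥ 0` the eigenvalues of `R`. Multiplying through by `1 + tα`, the fixed-point equation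
becomes `α / (1 + tα) = K⁻¹ ∑ i, λᵢ / (1 + tα + tλᵢ)`: the left side is strictly increasing in
`α ≥ 0` and the right side is antitone, so they meet at most once, and they do meet on
`[0, K⁻¹ ∑ i, λᵢ]` by the intermediate value theorem.
-/

open Matrix ComplexOrder Unitary

namespace Matrix

variable {n 𝕜 : Type*} [Fintype n] [DecidableEq n] [RCLike 𝕜]

theorem inv_conj_of_mem_unitary {U : Matrix n n 𝕜} (hU : U ∈ unitary (Matrix n n 𝕜))
    (X : Matrix n n 𝕜) : (U * X * star U)⁻¹ = U * X⁻¹ * star U := by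
  rw [mul_inv_rev, mul_inv_rev, inv_eq_left_inv (star_mul_self_of_mem hU),
    inv_eq_left_inv (mul_star_self_of_mem hU), mul_assoc]

theorem trace_conj_of_mem_unitary {U : Matrix n n 𝕜} (hU : U ∈ unitary (Matrix n n 𝕜))
    (X : Matrix n n 𝕜) : (U * X * star U).trace = X.trace := by
  rw [trace_mul_cycle, star_mul_self_of_mem hU, one_mul]

theorem inv_diagonal_of_ne_zero {v : n → 𝕜} (hv : ∀ i, v i ≠ 0) :
    (diagonal v)⁻¹ = diagonal fun i => (v i)⁻¹ := by
  refine inv_eq_left_inv ?_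
  rw [diagonal_mul_diagonal, ← diagonal_one]
  exact congrArg diagonal (funext fun i => inv_mul_cancel₀ (hv i))

theorem IsHermitian.trace_mul_inv_one_add_smul {A : Matrix n n 𝕜} (hA : A.IsHermitian) {c : ℝ}
    (hc : ∀ i, 1 + c * hA.eigenvalues i ≠ 0) :
    (A * (1 + c • A)⁻¹).trace = ∑ i, hA.eigenvalues i / (1 + c * hA.eigenvalues i) := by
  set U : Matrix n n 𝕜 := (hA.eigenvectorUnitary : Matrix n n 𝕜)
  have hU : U ∈ unitary (Matrix n n 𝕜) := hA.eigenvectorUnitary.2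
  set D : Matrix n n 𝕜 := diagonal (RCLike.ofReal ∘ hA.eigenvalues)
  have hA' : A = U * D * star U := by
    simpa only [conjStarAlgAut_apply] using hA.spectral_theorem
  have hconj : A * (1 + c • A)⁻¹ = U * (D * (1 + c • D)⁻¹) * star U := by
    have hB : 1 + c • A = U * (1 + c • D) * star U := by
      rw [hA', mul_add, add_mul, mul_one, mul_star_self_of_mem hU, mul_smul_comm, smul_mul_assoc]
    rw [hB, inv_conj_of_mem_unitary hU, hA']
    simp only [mul_assoc, ← mul_assoc (star U) U, star_mul_self_of_mem hU, one_mul]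
  have hdiag : 1 + c • D = diagonal fun i => ((1 + c * hA.eigenvalues i : ℝ) : 𝕜) := by
    rw [← diagonal_one, ← diagonal_smul, diagonal_add]
    congr 1
    funext i
    simp [RCLike.real_smul_eq_coe_mul]
  rw [hconj, trace_conj_of_mem_unitary hU, hdiag,
    inv_diagonal_of_ne_zero fun i => RCLike.ofReal_ne_zero.mpr (hc i), diagonal_mul_diagonal,
    trace_diagonal]
  simp [div_eq_mul_inv]

end Matrix

section FixedPoint

variable {ι : Type*} [Fintype ι] {e : ι → ℝ} {w t : ℝ}

theorem StrictMonoOn.eq_of_antitoneOn {α β : Type*} [LinearOrder α] [Preorder β] {f g : α → β}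
    {s : Set α} (hf : StrictMonoOn f s) (hg : AntitoneOn g s) {a b : α} (ha : a ∈ s) (hb : b ∈ s)
    (hfa : f a = g a) (hfb : f b = g b) : a = b := by
  by_contra hne
  rcases lt_or_gt_of_ne hne with hab | hba
  · exact (hf ha hb hab).not_ge (hfa ▸ hfb ▸ hg ha hb hab.le)
  · exact (hf hb ha hba).not_ge (hfb ▸ hfa ▸ hg hb ha hba.le)

theorem strictMonoOn_div_one_add_mul (ht : 0 ≤ t) :
    StrictMonoOn (fun α => α / (1 + t * α)) (Set.Ici 0) := by
  intro a (ha : 0 ≤ a) b (hb : 0 ≤ b) hab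
  rw [div_lt_div_iff₀ (by positivity) (by positivity)]
  linarith

theorem antitoneOn_mul_sum_div (he : ∀ i, 0 ≤ e i) (hw : 0 ≤ w) (ht : 0 ≤ t) :
    AntitoneOn (fun α => w * ∑ i, e i / (1 + t * α + t * e i)) (Set.Ici 0) := by
  intro a (ha : 0 ≤ a) b (hb : 0 ≤ b) hab
  dsimp only
  gcongr with i
  · exact he i
  · have := he i
    positivity

theorem div_one_add_div_mul_eq {α x : ℝ} (hu : 1 + t * α ≠ 0) :
    x / (1 + t / (1 + t * α) * x) = (1 + t * α) * (x / (1 + t * α + t * x)) := by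
  rw [div_mul_eq_mul_div, one_add_div hu, div_div_eq_mul_div, mul_comm x, mul_div_assoc]

theorem eq_mul_sum_div_iff {α : ℝ} (hu : 0 < 1 + t * α) :
    α = w * ∑ i, e i / (1 + t / (1 + t * α) * e i) ↔
      α / (1 + t * α) = w * ∑ i, e i / (1 + t * α + t * e i) := by
  simp only [div_one_add_div_mul_eq hu.ne', ← Finset.mul_sum]
  rw [div_eq_iff hu.ne']
  constructor <;> intro h <;> linarith

theorem exists_div_one_add_mul_eq_mul_sum_div (he : ∀ i, 0 ≤ e i) (hw : 0 ≤ w) (ht : 0 ≤ t) :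
    ∃ α, 0 ≤ α ∧ α / (1 + t * α) = w * ∑ i, e i / (1 + t * α + t * e i) := by
  set f : ℝ → ℝ := fun α => α / (1 + t * α) - w * ∑ i, e i / (1 + t * α + t * e i)
  set B := w * ∑ i, e i
  have hB : 0 ≤ B := mul_nonneg hw (Finset.sum_nonneg fun i _ => he i)
  have hf : ContinuousOn f (Set.Icc 0 B) := by
    refine (continuousOn_id.div (by fun_prop) fun α hα => ?_).sub
      (continuousOn_const.mul (continuousOn_finsetSum _ fun i _ =>
        continuousOn_const.div (by fun_prop) fun α hα => ?_))
    · have := hα.1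
      positivity
    · have := hα.1
      have := he i
      positivity
  have hf0 : f 0 ≤ 0 := by
    simp only [f, mul_zero, add_zero, zero_div, zero_sub, neg_nonpos]
    refine mul_nonneg hw (Finset.sum_nonneg fun i _ => div_nonneg (he i) ?_)
    have := he i
    positivity
  have hfB : 0 ≤ f B := by
    have hterm : ∀ i, e i / (1 + t * B + t * e i) ≤ e i / (1 + t * B) := fun i =>
      div_le_div_of_nonneg_left (he i) (by positivity) (by have := he i; nlinarith)
    calc 0 = B / (1 + t * B) - w * ∑ i, e i / (1 + t * B) := by
          rw [← Finset.sum_div, mul_div_assoc, sub_self]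
      _ ≤ f B := by simp only [f]; gcongr B / (1 + t * B) - w * ∑ i, ?_ with i; exact hterm i
  obtain ⟨α, hα, hfα⟩ := intermediate_value_Icc hB hf ⟨hf0, hfB⟩
  exact ⟨α, hα.1, sub_eq_zero.mp hfα⟩

theorem existsUnique_eq_mul_sum_div (he : ∀ i, 0 ≤ e i) (hw : 0 ≤ w) (ht : 0 ≤ t) :
    ∃! α, 0 ≤ α ∧ α = w * ∑ i, e i / (1 + t / (1 + t * α) * e i) := by
  rw [existsUnique_congr fun α => and_congr_right fun (hα : 0 ≤ α) =>
    eq_mul_sum_div_iff (e := e) (w := w) (by positivity : 0 < 1 + t * α)]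
  obtain ⟨α, hα, hfix⟩ := exists_div_one_add_mul_eq_mul_sum_div he hw ht
  exact ⟨α, ⟨hα, hfix⟩, fun β ⟨hβ, hβfix⟩ => (strictMonoOn_div_one_add_mul ht).eq_of_antitoneOn
    (antitoneOn_mul_sum_div he hw ht) hβ hα hβfix hfix⟩

end FixedPoint

theorem stmt10_general {M : ℕ} (R : Matrix (Fin M) (Fin M) ℂ) (hR : R.PosSemidef)
    (K : ℕ) (t : ℝ) (ht : 0 < t) :
    (∀ α : ℝ, 0 ≤ α →
      IsUnit ((1 : Matrix (Fin M) (Fin M) ℂ) + ((t / (1 + t * α) : ℝ) : ℂ) • R)) ∧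
    ∃! α : ℝ, 0 ≤ α ∧
      (α : ℂ) = (K : ℂ)⁻¹ *
        (R * ((1 : Matrix (Fin M) (Fin M) ℂ) + ((t / (1 + t * α) : ℝ) : ℂ) • R)⁻¹).trace := by
  have hc : ∀ α : ℝ, 0 ≤ α → 0 ≤ t / (1 + t * α) := fun α hα => by positivity
  refine ⟨fun α hα => (PosDef.one.add_posSemidef (hR.smul
    (Complex.zero_le_real.mpr (hc α hα)))).isUnit, ?_⟩
  refine (existsUnique_congr fun α => and_congr_right fun hα => ?_).mpr
    (existsUnique_eq_mul_sum_div hR.eigenvalues_nonneg (inv_nonneg.mpr K.cast_nonneg) ht.le)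
  have hden : ∀ i, 1 + t / (1 + t * α) * hR.1.eigenvalues i ≠ 0 := fun i => by
    have := hR.eigenvalues_nonneg i
    have := hc α hα
    positivity
  rw [Complex.coe_smul, hR.1.trace_mul_inv_one_add_smul hden, ← RCLike.ofReal_eq_complex_ofReal,
    ← RCLike.ofReal_natCast, ← RCLike.ofReal_inv, ← RCLike.ofReal_mul, RCLike.ofReal_inj]

/-- for `R` Hermitian positive semidefinite, `K ≥ 1` and `t > 0`, the matrix
`I_M + (t/(1+tα)) R` is invertible for every `α ≥ 0`, and there exists a unique `α ≥ 0`
satisfying the fixed-point equation `α = (1/K) tr(R (I_M + (t/(1+tα)) R)⁻¹)`. -/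
theorem stmt10 {M : ℕ} (R : Matrix (Fin M) (Fin M) ℂ) (hR : R.PosSemidef)
    (K : ℕ) (hK : 1 ≤ K) (t : ℝ) (ht : 0 < t) :
    (∀ α : ℝ, 0 ≤ α →
      IsUnit ((1 : Matrix (Fin M) (Fin M) ℂ) + ((t / (1 + t * α) : ℝ) : ℂ) • R)) ∧
    ∃! α : ℝ, 0 ≤ α ∧
      (α : ℂ) = (K : ℂ)⁻¹ *
        (R * ((1 : Matrix (Fin M) (Fin M) ℂ) + ((t / (1 + t * α) : ℝ) : ℂ) • R)⁻¹).trace :=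
  stmt10_general R hR K t ht
end

section
/- Let R be an M×M Hermitian positive semidefinite complex matrix, K ≥ 1, t > 0, and let α ≥ 0 satisfy α = (1/K)·trace( R·(I_M + (t/(1+tα))·R)⁻¹ ). Set T = (I_M + (t/(1+tα))·R)⁻¹. Then (t²/K)·trace(R T R T) < (1 + tα)². In particular the denominator (1 + tα)² − (t²/K)·trace(RTRT) of the deterministic equivalent β(t) is strictly positive, so β(t) = [(1/K)·trace(R T²)] / [(1 + tα)² − (t²/K)·trace(RTRT)] is well defined and nonnegative. -/
open Matrix ComplexOrder

/-- if `α ≥ 0` solves the fixed-point equation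
`α = (1/K) tr(R (I_M + (t/(1+tα)) R)⁻¹)` and `T = (I_M + (t/(1+tα)) R)⁻¹`, then
`(t²/K) tr(R T R T) < (1 + tα)²`, so the deterministic equivalent
`β(t) = [(1/K) tr(R T²)] / [(1 + tα)² − (t²/K) tr(R T R T)]` is well defined and nonnegative. -/
theorem stmt11 {M : ℕ} (R : Matrix (Fin M) (Fin M) ℂ) (hR : R.PosSemidef)
    (K : ℕ) (hK : 1 ≤ K) (t : ℝ) (ht : 0 < t) (α : ℝ) (hα : 0 ≤ α)
    (hfix : (α : ℂ) = (K : ℂ)⁻¹ *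
      (R * ((1 : Matrix (Fin M) (Fin M) ℂ) + ((t / (1 + t * α) : ℝ) : ℂ) • R)⁻¹).trace)
    (T : Matrix (Fin M) (Fin M) ℂ)
    (hT : T = ((1 : Matrix (Fin M) (Fin M) ℂ) + ((t / (1 + t * α) : ℝ) : ℂ) • R)⁻¹) :
    (t ^ 2 / K) * (R * T * R * T).trace.re < (1 + t * α) ^ 2 ∧
    0 ≤ ((1 / K) * (R * T * T).trace.re) /
      ((1 + t * α) ^ 2 - (t ^ 2 / K) * (R * T * R * T).trace.re) := by
  have h1 : (0 : ℝ) < 1 + t * α := by positivity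
  set s : ℝ := t / (1 + t * α) with hs_def
  have hs : 0 ≤ s := by positivity
  have hst : (1 + t * α) * s = t := by rw [hs_def]; field_simp
  have hH := hR.1
  set U : Matrix (Fin M) (Fin M) ℂ := (hH.eigenvectorUnitary : Matrix (Fin M) (Fin M) ℂ) with hU
  have hUsU : star U * U = 1 := mem_unitaryGroup_iff'.mp hH.eigenvectorUnitary.2
  have hUUs : U * star U = 1 := mem_unitaryGroup_iff.mp hH.eigenvectorUnitary.2
  set d : Fin M → ℝ := hH.eigenvalues with hd_def
  have hd : ∀ i, 0 ≤ d i := fun i => hR.eigenvalues_nonneg i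
  set f : Fin M → ℝ := fun i => 1 + s * d i with hf_def
  have hf : ∀ i, 0 < f i := fun i => by
    have := mul_nonneg hs (hd i)
    have : f i = 1 + s * d i := rfl
    rw [this]
    nlinarith [mul_nonneg hs (hd i)]
  set D : Matrix (Fin M) (Fin M) ℂ := diagonal (fun i => (d i : ℂ)) with hD_def
  set E : Matrix (Fin M) (Fin M) ℂ := diagonal (fun i => (((f i)⁻¹ : ℝ) : ℂ)) with hE_def
  have hRD : R = U * D * star U := hH.spectral_theorem
  have hfD : diagonal (fun i => ((f i : ℝ) : ℂ)) = 1 + (s : ℂ) • D := by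
    rw [hD_def]
    ext i j
    rcases eq_or_ne i j with h | h
    · subst h
      simp only [diagonal_apply_eq, Matrix.add_apply, Matrix.smul_apply, one_apply_eq,
        smul_eq_mul, hf_def]
      push_cast
      ring
    · simp [diagonal_apply_ne _ h, one_apply_ne h]
  have hB : (1 : Matrix (Fin M) (Fin M) ℂ) + ((s : ℝ) : ℂ) • R
      = U * diagonal (fun i => ((f i : ℝ) : ℂ)) * star U := by
    rw [hfD, mul_add, add_mul, mul_one, hUUs, hRD]
    congr 1
    rw [mul_smul_comm, smul_mul_assoc]
  have hTE : T = U * E * star U := by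
    rw [hT, hB]
    apply inv_eq_right_inv
    rw [hE_def]
    calc U * diagonal (fun i => ((f i : ℝ) : ℂ)) * star U * (U * diagonal (fun i => (((f i)⁻¹ : ℝ) : ℂ)) * star U)
        = U * (diagonal (fun i => ((f i : ℝ) : ℂ)) * (star U * U) * diagonal (fun i => (((f i)⁻¹ : ℝ) : ℂ))) * star U := by
          simp only [Matrix.mul_assoc]
      _ = 1 := by
          rw [hUsU, mul_one, diagonal_mul_diagonal]
          have : (fun i => ((f i : ℝ) : ℂ) * (((f i)⁻¹ : ℝ) : ℂ)) = fun _ => (1 : ℂ) := by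
            funext i
            rw [← Complex.ofReal_mul, mul_inv_cancel₀ (hf i).ne']
            simp
          rw [this, diagonal_one, mul_one, hUUs]
  have key : ∀ A B : Matrix (Fin M) (Fin M) ℂ,
      (U * A * star U) * (U * B * star U) = U * (A * B) * star U := by
    intro A B
    calc (U * A * star U) * (U * B * star U)
        = U * (A * ((star U * U) * B)) * star U := by simp only [Matrix.mul_assoc]
      _ = U * (A * B) * star U := by rw [hUsU, one_mul]
  have keytr : ∀ A : Matrix (Fin M) (Fin M) ℂ, (U * A * star U).trace = A.trace := by
    intro A
    rw [trace_mul_cycle, hUsU, one_mul]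
  -- traces
  have hRT : R * T = U * (D * E) * star U := by rw [hRD, hTE, key]
  have h2 : (R * T * R * T).trace = ((∑ i, d i * (f i)⁻¹ * (d i * (f i)⁻¹) : ℝ) : ℂ) := by
    have e : R * T * R * T = U * ((D * E) * (D * E)) * star U := by
      rw [Matrix.mul_assoc (R * T) R T, hRT, key]
    rw [e, keytr, hD_def, hE_def, diagonal_mul_diagonal, diagonal_mul_diagonal, trace_diagonal]
    push_cast
    exact Finset.sum_congr rfl fun i _ => by ring
  have h3 : (R * T * T).trace = ((∑ i, d i * (f i)⁻¹ * (f i)⁻¹ : ℝ) : ℂ) := by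
    have e : R * T * T = U * ((D * E) * E) * star U := by rw [hRT, hTE, key]
    rw [e, keytr, hD_def, hE_def, diagonal_mul_diagonal, diagonal_mul_diagonal, trace_diagonal]
    push_cast
    exact Finset.sum_congr rfl fun i _ => by ring
  have hfixR : α = (K : ℝ)⁻¹ * ∑ i, d i * (f i)⁻¹ := by
    have h4 : (R * T).trace = ((∑ i, d i * (f i)⁻¹ : ℝ) : ℂ) := by
      rw [hRT, keytr, hD_def, hE_def, diagonal_mul_diagonal, trace_diagonal]
      push_cast
      exact Finset.sum_congr rfl fun i _ => by ring
    rw [← hT, h4] at hfix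
    have : ((α : ℝ) : ℂ) = (((K : ℝ)⁻¹ * ∑ i, d i * (f i)⁻¹ : ℝ) : ℂ) := by
      rw [hfix]; push_cast; ring
    exact_mod_cast this
  have hK0 : (0 : ℝ) < K := by exact_mod_cast hK
  -- per-term bound
  have hterm : ∀ i, t ^ 2 * (d i * (f i)⁻¹ * (d i * (f i)⁻¹)) ≤ (1 + t * α) * (t * (d i * (f i)⁻¹)) := by
    intro i
    have hx : 0 ≤ d i * (f i)⁻¹ := mul_nonneg (hd i) (le_of_lt (inv_pos.mpr (hf i)))
    have e : (1 + t * α) * f i = 1 + t * α + t * d i := by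
      have : f i = 1 + s * d i := rfl
      rw [this]
      linear_combination (d i) * hst
    have hub : t * (d i * (f i)⁻¹) ≤ 1 + t * α := by
      rw [show t * (d i * (f i)⁻¹) = (t * d i) / f i by ring, div_le_iff₀ (hf i)]
      linarith [e]
    have hprod := mul_nonneg (mul_nonneg ht.le hx) (sub_nonneg.mpr hub)
    nlinarith [hprod]
  have hsum : t ^ 2 * (∑ i, d i * (f i)⁻¹ * (d i * (f i)⁻¹)) ≤ (1 + t * α) * (t * ∑ i, d i * (f i)⁻¹) := by
    rw [Finset.mul_sum, Finset.mul_sum, Finset.mul_sum]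
    exact Finset.sum_le_sum fun i _ => hterm i
  have hS1 : ∑ i, d i * (f i)⁻¹ = K * α := by
    rw [hfixR, ← mul_assoc, mul_inv_cancel₀ hK0.ne', one_mul]
  have main : (t ^ 2 / K) * (∑ i, d i * (f i)⁻¹ * (d i * (f i)⁻¹)) < (1 + t * α) ^ 2 := by
    have h5 : (t ^ 2 / K) * (∑ i, d i * (f i)⁻¹ * (d i * (f i)⁻¹)) ≤ (1 + t * α) * (t * α) := by
      rw [hS1] at hsum
      rw [div_mul_eq_mul_div, div_le_iff₀ hK0]
      nlinarith [hsum]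
    nlinarith [mul_pos h1 h1, mul_nonneg ht.le hα]
  have h2re : (R * T * R * T).trace.re = ∑ i, d i * (f i)⁻¹ * (d i * (f i)⁻¹) := by
    rw [h2, Complex.ofReal_re]
  have h3re : (R * T * T).trace.re = ∑ i, d i * (f i)⁻¹ * (f i)⁻¹ := by
    rw [h3, Complex.ofReal_re]
  constructor
  · rw [h2re]; exact main
  · apply div_nonneg
    · rw [h3re]
      apply mul_nonneg (by positivity)
      exact Finset.sum_nonneg fun i _ =>
        mul_nonneg (mul_nonneg (hd i) (inv_pos.mpr (hf i)).le) (inv_pos.mpr (hf i)).le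
    · rw [h2re]; linarith [main]
end

section
/- Let R be an M×M Hermitian positive semidefinite complex matrix and K ≥ 1. Suppose α : (0, ∞) → [0, ∞) is differentiable and satisfies, for every t > 0, the fixed-point equation α(t) = (1/K)·trace( R·(I_M + (t/(1+tα(t)))·R)⁻¹ ). Define T(t) = (I_M + (t/(1+tα(t)))·R)⁻¹ and β(t) = [(1/K)·trace(R T(t)²)] / [(1 + tα(t))² − (t²/K)·trace(R T(t) R T(t))]. Then the function t ↦ (1/K)·trace(T(t)) is differentiable on (0, ∞) and its derivative equals −β(t) for every t > 0. -/
/-!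
Write `T(s) = (1 + c(s) R)⁻¹` with `c(s) = s / (1 + s α(s))`; for `c ≥ 0` the matrix `1 + c R` is
positive definite, hence invertible. Differentiating the inverse gives `T' = -c' T R T`, so
`(1/K) tr T` has derivative `-(c'/K) tr(R T²)`, and differentiating the fixed-point equation
`α = (1/K) tr(R T)` gives `α' = -(c'/K) tr(R T R T)`. Substituting this into
`c' = (1 - t² α') / (1 + t α)²` yields `c' · ((1 + t α)² - (t²/K) tr(R T R T)) = 1`: `c'` is the
reciprocal of the denominator of `β`.
-/

open Matrix ComplexOrder

section RingInverse

variable {𝕜 A : Type*} [NontriviallyNormedField 𝕜] [NormedRing A] [NormedAlgebra 𝕜 A]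
  [HasSummableGeomSeries A]

theorem HasDerivAt.ringInverse {f : 𝕜 → A} {f' : A} {t : 𝕜} (hf : HasDerivAt f f' t)
    (ht : IsUnit (f t)) :
    HasDerivAt (fun s => Ring.inverse (f s))
      (-(Ring.inverse (f t) * f' * Ring.inverse (f t))) t := by
  obtain ⟨u, hu⟩ := ht
  have h := (hu ▸ hasFDerivAt_ringInverse (𝕜 := 𝕜) u).comp_hasDerivAt t hf
  rw [← hu, Ring.inverse_unit]
  simp only [_root_.neg_apply, ContinuousLinearMap.mulLeftRight_apply] at h
  exact h

end RingInverse

namespace Matrix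

variable {n : Type*} [Fintype n] [DecidableEq n]

theorem isUnit_one_add_smul_of_posSemidef {R : Matrix n n ℂ} (hR : R.PosSemidef) {c : ℝ}
    (hc : 0 ≤ c) : IsUnit (1 + c • R) :=
  (PosDef.one.add_posSemidef (hR.smul hc)).isUnit

section Calculus

-- Any complete algebra norm would do: it induces the usual topology on matrices.
attribute [local instance] Matrix.linftyOpNormedRing Matrix.linftyOpNormedAlgebra

theorem hasDerivAt_inv_one_add_smul (R : Matrix n n ℂ) {c : ℝ → ℝ} {c' t : ℝ}
    (hc : HasDerivAt c c' t) (hunit : IsUnit (1 + c t • R)) :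
    HasDerivAt (fun s => (1 + c s • R)⁻¹)
      (-(c' • ((1 + c t • R)⁻¹ * R * (1 + c t • R)⁻¹))) t := by
  simp only [nonsing_inv_eq_ringInverse]
  have h := ((hc.smul_const R).const_add 1).ringInverse hunit
  simp only [mul_smul_comm, smul_mul_assoc] at h
  exact h

theorem _root_.HasDerivAt.re_trace {F : ℝ → Matrix n n ℂ} {F' : Matrix n n ℂ} {t : ℝ}
    (hF : HasDerivAt F F' t) : HasDerivAt (fun s => (F s).trace.re) F'.trace.re t :=
  (Complex.reLm.comp ((traceLinearMap n ℂ ℂ).restrictScalars ℝ)).toContinuousLinearMap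
    |>.hasFDerivAt.comp_hasDerivAt t hF

theorem hasDerivAt_re_trace_mul_inv_one_add_smul (X R : Matrix n n ℂ) {c : ℝ → ℝ} {c' t : ℝ}
    (hc : HasDerivAt c c' t) (hunit : IsUnit (1 + c t • R)) :
    HasDerivAt (fun s => (X * (1 + c s • R)⁻¹).trace.re)
      (-(c' * (X * (1 + c t • R)⁻¹ * R * (1 + c t • R)⁻¹).trace.re)) t := by
  have h := ((hasDerivAt_inv_one_add_smul R hc hunit).const_mul X).re_trace
  simp only [Matrix.mul_assoc, mul_neg, mul_smul_comm, trace_neg, trace_smul, Complex.neg_re,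
    Complex.real_smul, Complex.re_ofReal_mul] at h ⊢
  exact h

end Calculus

end Matrix

theorem stmt12_general {M : ℕ} (R : Matrix (Fin M) (Fin M) ℂ) (hR : R.PosSemidef)
    (K : ℕ) (α : ℝ → ℝ)
    (hα0 : ∀ t, 0 < t → 0 ≤ α t)
    (hαdiff : ∀ t, 0 < t → DifferentiableAt ℝ α t)
    (hfix : ∀ t, 0 < t → (α t : ℂ) = (K : ℂ)⁻¹ *
      (R * ((1 : Matrix (Fin M) (Fin M) ℂ) + ((t / (1 + t * α t) : ℝ) : ℂ) • R)⁻¹).trace)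
    (T : ℝ → Matrix (Fin M) (Fin M) ℂ)
    (hT : ∀ t, T t = ((1 : Matrix (Fin M) (Fin M) ℂ) + ((t / (1 + t * α t) : ℝ) : ℂ) • R)⁻¹)
    (β : ℝ → ℝ)
    (hβ : ∀ t, β t = ((1 / K) * (R * T t * T t).trace.re) /
      ((1 + t * α t) ^ 2 - (t ^ 2 / K) * (R * T t * R * T t).trace.re)) :
    ∀ t, 0 < t → HasDerivAt (fun s : ℝ => (1 / K) * (T s).trace.re) (-(β t)) t := by
  intro t ht
  set c : ℝ → ℝ := fun s => s / (1 + s * α s)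
  have hT' : ∀ s, T s = (1 + c s • R)⁻¹ := fun s => by rw [hT, Complex.coe_smul]
  have hpos : 0 < 1 + t * α t := by nlinarith [hα0 t ht]
  have hunit : IsUnit (1 + c t • R) :=
    isUnit_one_add_smul_of_posSemidef hR (div_nonneg ht.le hpos.le)
  have hα := (hαdiff t ht).hasDerivAt
  set c' := (1 - t ^ 2 * deriv α t) / (1 + t * α t) ^ 2
  have hc : HasDerivAt c c' t :=
    ((hasDerivAt_id' t).div (((hasDerivAt_id' t).mul hα).const_add 1) hpos.ne').congr_deriv
      (by simp only [Pi.mul_apply, c']; ring)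
  have hderT := hasDerivAt_re_trace_mul_inv_one_add_smul 1 R hc hunit
  have hderRT := hasDerivAt_re_trace_mul_inv_one_add_smul R R hc hunit
  simp only [← hT', Matrix.one_mul] at hderT hderRT
  have hα_eq : α =ᶠ[nhds t] fun s => (1 / K : ℝ) * (R * T s).trace.re := by
    filter_upwards [Ioi_mem_nhds ht] with s hs
    have := congrArg Complex.re (hfix s hs)
    rwa [← hT, ← Complex.ofReal_natCast, ← Complex.ofReal_inv, Complex.re_ofReal_mul,
      Complex.ofReal_re, ← one_div] at this
  have hα' : deriv α t = (1 / K : ℝ) * -(c' * (R * T t * R * T t).trace.re) :=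
    hα.unique ((hderRT.const_mul (1 / K : ℝ)).congr_of_eventuallyEq hα_eq)
  have hcD : c' * ((1 + t * α t) ^ 2 - t ^ 2 / K * (R * T t * R * T t).trace.re) = 1 := by
    have hc'P : c' * (1 + t * α t) ^ 2 = 1 - t ^ 2 * deriv α t := by
      simp only [c']
      field_simp
    linear_combination hc'P - t ^ 2 * hα'
  refine (hderT.const_mul (1 / K : ℝ)).congr_deriv ?_
  rw [trace_mul_cycle, trace_mul_cycle, hβ t, eq_comm, neg_eq_iff_eq_neg,
    div_eq_iff (right_ne_zero_of_mul_eq_one hcD)]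
  linear_combination (-(1 / K * (R * T t * T t).trace.re)) * hcD

/-- if `α : (0,∞) → [0,∞)` is differentiable and solves the fixed-point
equation `α(t) = (1/K) tr(R (I_M + (t/(1+tα(t))) R)⁻¹)` for all `t > 0`, and
`T(t) = (I_M + (t/(1+tα(t))) R)⁻¹`,
`β(t) = [(1/K) tr(R T(t)²)] / [(1+tα(t))² − (t²/K) tr(R T(t) R T(t))]`, then
`t ↦ (1/K) tr(T(t))` is differentiable on `(0,∞)` with derivative `−β(t)`. -/
theorem stmt12 {M : ℕ} (R : Matrix (Fin M) (Fin M) ℂ) (hR : R.PosSemidef)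
    (K : ℕ) (hK : 1 ≤ K) (α : ℝ → ℝ)
    (hα0 : ∀ t, 0 < t → 0 ≤ α t)
    (hαdiff : ∀ t, 0 < t → DifferentiableAt ℝ α t)
    (hfix : ∀ t, 0 < t → (α t : ℂ) = (K : ℂ)⁻¹ *
      (R * ((1 : Matrix (Fin M) (Fin M) ℂ) + ((t / (1 + t * α t) : ℝ) : ℂ) • R)⁻¹).trace)
    (T : ℝ → Matrix (Fin M) (Fin M) ℂ)
    (hT : ∀ t, T t = ((1 : Matrix (Fin M) (Fin M) ℂ) + ((t / (1 + t * α t) : ℝ) : ℂ) • R)⁻¹)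
    (β : ℝ → ℝ)
    (hβ : ∀ t, β t = ((1 / K) * (R * T t * T t).trace.re) /
      ((1 + t * α t) ^ 2 - (t ^ 2 / K) * (R * T t * R * T t).trace.re)) :
    ∀ t, 0 < t → HasDerivAt (fun s : ℝ => (1 / K) * (T s).trace.re) (-(β t)) t :=
  stmt12_general R hR K α hα0 hαdiff hfix T hT β hβ
end

section
/- Let R be a nonzero M×M Hermitian positive semidefinite complex matrix and K ≥ 1. For t > 0 let α(t) ≥ 0 be the unique solution of α = (1/K)·trace( R·(I_M + (t/(1+tα))·R)⁻¹ ), let T(t) = (I_M + (t/(1+tα(t)))·R)⁻¹ and β(t) = [(1/K)·trace(R T(t)²)] / [(1 + tα(t))² − (t²/K)·trace(R T(t) R T(t))]. Then the function ρ ↦ (1/ρ²)·β(1/ρ) is strictly decreasing on (0, ∞). Consequently, for any γ, P_a > 0, the equation (γ/ρ²)·β(1/ρ) = P_a has at most one solution ρ > 0. -/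
/-!
Diagonalise `R = U diag(λ) U*` with `λᵢ ≥ 0`, not all zero. For `ρ > 0` put `s = ρ + α(1/ρ)`;
then `1/ρ / (1 + α(1/ρ)/ρ) = 1/s`, so every trace becomes a sum over the eigenvalues, the
fixed-point equation reads `ρ = s (1 - (1/K) Σ λᵢ/(s+λᵢ))`, and
`(1/ρ²) β(1/ρ) = N(s) / (1 - Q(s))` with `N(s) = (1/K) Σ λᵢ/(s+λᵢ)²`,
`Q(s) = (1/K) Σ λᵢ²/(s+λᵢ)²`.

Where `ρ > 0`, the map `s ↦ ρ` is strictly increasing: its increment from `a` to `b` is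
`(b - a)(1 - (1/K) Σ λᵢ²/((a+λᵢ)(b+λᵢ)))`, and the last sum is at most `Σ λᵢ/(a+λᵢ) < K`.
Meanwhile `N` is strictly decreasing and `Q ≤ (1/K) Σ λᵢ/(s+λᵢ) < 1` is decreasing, so
`N/(1 - Q)` is strictly decreasing in `s`, hence in `ρ`; injectivity gives uniqueness of `ρ`.
-/

open Matrix ComplexOrder

namespace Matrix.IsHermitian

variable {n 𝕜 : Type*} [RCLike 𝕜] [Fintype n] [DecidableEq n] {A : Matrix n n 𝕜}

lemma trace_cfc (hA : A.IsHermitian) (f : ℝ → ℝ) :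
    (cfc f A).trace = ((∑ i, f (hA.eigenvalues i) : ℝ) : 𝕜) := by
  rw [hA.cfc_eq, IsHermitian.cfc, Unitary.conjStarAlgAut_apply, trace_mul_cycle,
    Unitary.coe_star_mul_self, one_mul, trace_diagonal]
  simp

lemma inv_one_add_smul_eq_cfc (hA : A.IsHermitian) {c : ℝ}
    (hc : ∀ i, 1 + c * hA.eigenvalues i ≠ 0) :
    (1 + (c : 𝕜) • A)⁻¹ = cfc (fun x ↦ (1 + c * x)⁻¹) A := by
  have hspec : ∀ x ∈ spectrum ℝ A, 1 + c * x ≠ 0 := by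
    rw [hA.spectrum_real_eq_range_eigenvalues]
    rintro - ⟨i, rfl⟩
    exact hc i
  have hA' : IsSelfAdjoint A := hA
  rw [cfc_inv (hf' := hspec) (hf := A.finite_real_spectrum.continuousOn _),
    cfc_const_add 1 (c * ·) A (A.finite_real_spectrum.continuousOn _), cfc_const_mul_id c A,
    nonsing_inv_eq_ringInverse, Algebra.algebraMap_eq_smul_one, one_smul,
    RCLike.real_smul_eq_coe_smul (K := 𝕜)]

lemma trace_mul_inv_one_add_smul_s13 (hA : A.IsHermitian) {c : ℝ}
    (hc : ∀ i, 1 + c * hA.eigenvalues i ≠ 0) :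
    (A * (1 + (c : 𝕜) • A)⁻¹).trace =
      ((∑ i, hA.eigenvalues i / (1 + c * hA.eigenvalues i) : ℝ) : 𝕜) := by
  have hcont (f : ℝ → ℝ) : ContinuousOn f (spectrum ℝ A) := A.finite_real_spectrum.continuousOn f
  calc (A * (1 + (c : 𝕜) • A)⁻¹).trace = (cfc (fun x ↦ x * (1 + c * x)⁻¹) A).trace := by
        rw [cfc_mul _ _ _ (hcont _) (hcont _), cfc_id' ℝ A, hA.inv_one_add_smul_eq_cfc hc]
    _ = _ := by simp only [hA.trace_cfc, div_eq_mul_inv]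

lemma trace_mul_inv_one_add_smul_mul_inv_one_add_smul (hA : A.IsHermitian) {c : ℝ}
    (hc : ∀ i, 1 + c * hA.eigenvalues i ≠ 0) :
    (A * (1 + (c : 𝕜) • A)⁻¹ * (1 + (c : 𝕜) • A)⁻¹).trace =
      ((∑ i, hA.eigenvalues i / (1 + c * hA.eigenvalues i) ^ 2 : ℝ) : 𝕜) := by
  have hcont (f : ℝ → ℝ) : ContinuousOn f (spectrum ℝ A) := A.finite_real_spectrum.continuousOn f
  calc (A * (1 + (c : 𝕜) • A)⁻¹ * (1 + (c : 𝕜) • A)⁻¹).trace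
      = (cfc (fun x ↦ x * (1 + c * x)⁻¹ * (1 + c * x)⁻¹) A).trace := by
        rw [cfc_mul _ _ _ (hcont _) (hcont _), cfc_mul _ _ _ (hcont _) (hcont _), cfc_id' ℝ A,
          hA.inv_one_add_smul_eq_cfc hc]
    _ = _ := by simp only [hA.trace_cfc, div_eq_mul_inv, sq, mul_inv, mul_assoc]

lemma trace_mul_inv_one_add_smul_mul_mul_inv_one_add_smul (hA : A.IsHermitian) {c : ℝ}
    (hc : ∀ i, 1 + c * hA.eigenvalues i ≠ 0) :
    (A * (1 + (c : 𝕜) • A)⁻¹ * A * (1 + (c : 𝕜) • A)⁻¹).trace =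
      ((∑ i, hA.eigenvalues i ^ 2 / (1 + c * hA.eigenvalues i) ^ 2 : ℝ) : 𝕜) := by
  have hcont (f : ℝ → ℝ) : ContinuousOn f (spectrum ℝ A) := A.finite_real_spectrum.continuousOn f
  calc (A * (1 + (c : 𝕜) • A)⁻¹ * A * (1 + (c : 𝕜) • A)⁻¹).trace
      = (cfc (fun x ↦ x * (1 + c * x)⁻¹ * x * (1 + c * x)⁻¹) A).trace := by
        rw [cfc_mul _ _ _ (hcont _) (hcont _), cfc_mul _ _ _ (hcont _) (hcont _),
          cfc_mul _ _ _ (hcont _) (hcont _), cfc_id' ℝ A, hA.inv_one_add_smul_eq_cfc hc]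
    _ = _ := by
        rw [hA.trace_cfc]
        congr 2
        ext i
        rw [div_eq_mul_inv, ← inv_pow]
        ring

end Matrix.IsHermitian

lemma Matrix.PosSemidef.exists_eigenvalues_pos {n 𝕜 : Type*} [RCLike 𝕜] [Fintype n]
    [DecidableEq n] {A : Matrix n n 𝕜} (hA : A.PosSemidef) (h : A ≠ 0) :
    ∃ i, 0 < hA.1.eigenvalues i := by
  by_contra! hle
  exact h (hA.1.eigenvalues_eq_zero_iff.1
    (funext fun i ↦ le_antisymm (hle i) (hA.eigenvalues_nonneg i)))

section Field

variable {α : Type*} [Field α]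

lemma one_add_inv_mul {s : α} (hs : s ≠ 0) (x : α) : 1 + s⁻¹ * x = (s + x) / s := by
  field_simp

lemma div_one_add_inv_mul {s : α} (hs : s ≠ 0) (x : α) : x / (1 + s⁻¹ * x) = s * (x / (s + x)) := by
  rw [one_add_inv_mul hs, div_div_eq_mul_div]
  ring

lemma one_div_div_one_add_one_div_mul {ρ : α} (hρ : ρ ≠ 0) (a : α) :
    1 / ρ / (1 + 1 / ρ * a) = (ρ + a)⁻¹ := by
  rw [one_div, one_add_inv_mul hρ, div_div_eq_mul_div, inv_mul_cancel₀ hρ, one_div]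

variable [LinearOrder α] [IsStrictOrderedRing α]

lemma sq_div_mul_le_div {x a b : α} (hx : 0 ≤ x) (ha : 0 < a) (hb : 0 < b) :
    x ^ 2 / ((a + x) * (b + x)) ≤ x / (a + x) := by
  rw [sq, mul_comm (a + x), ← div_mul_div_comm]
  exact mul_le_of_le_one_left (by positivity) ((div_le_one (by positivity)).2 (by linarith))

end Field

namespace DetEquiv

variable {ι : Type*} [Fintype ι] (K : ℝ) (lam : ι → ℝ)

/- With `lam` the eigenvalues of `R` and `s = ρ + α(1/ρ)`, the fixed-point equation says
`ρ = multiplier K lam s`, and `(1/ρ²) β(1/ρ) = power K lam s`. -/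
noncomputable def multiplier (s : ℝ) : ℝ := s * (1 - K⁻¹ * ∑ i, lam i / (s + lam i))

noncomputable def power (s : ℝ) : ℝ :=
  (K⁻¹ * ∑ i, lam i / (s + lam i) ^ 2) / (1 - K⁻¹ * ∑ i, lam i ^ 2 / (s + lam i) ^ 2)

variable {K lam}

lemma mean_lt_one_of_multiplier_pos {s : ℝ} (hs : 0 < s) (h : 0 < multiplier K lam s) :
    K⁻¹ * ∑ i, lam i / (s + lam i) < 1 :=
  sub_pos.1 ((pos_iff_pos_of_mul_pos h).1 hs)

lemma multiplier_sub_multiplier {a b : ℝ} (ha : 0 < a) (hb : 0 < b) (hlam : ∀ i, 0 ≤ lam i) :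
    multiplier K lam b - multiplier K lam a =
      (b - a) * (1 - K⁻¹ * ∑ i, lam i ^ 2 / ((a + lam i) * (b + lam i))) := by
  have hterm (i : ι) : b * (lam i / (b + lam i)) - a * (lam i / (a + lam i)) =
      (b - a) * (lam i ^ 2 / ((a + lam i) * (b + lam i))) := by
    have := hlam i
    field_simp
    ring
  calc multiplier K lam b - multiplier K lam a
      = (b - a) - K⁻¹ * ∑ i, (b * (lam i / (b + lam i)) - a * (lam i / (a + lam i))) := by
        simp only [multiplier, Finset.sum_sub_distrib, ← Finset.mul_sum]
        ring
    _ = _ := by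
        simp only [hterm, ← Finset.mul_sum]
        ring

lemma strictMonoOn_multiplier (hK : 0 ≤ K) (hlam : ∀ i, 0 ≤ lam i) :
    StrictMonoOn (multiplier K lam) {s | 0 < s ∧ 0 < multiplier K lam s} := by
  rintro a ⟨ha, hρa⟩ b ⟨hb, -⟩ hab
  have hle : K⁻¹ * ∑ i, lam i ^ 2 / ((a + lam i) * (b + lam i)) ≤
      K⁻¹ * ∑ i, lam i / (a + lam i) :=
    mul_le_mul_of_nonneg_left
      (Finset.sum_le_sum fun i _ ↦ sq_div_mul_le_div (hlam i) ha hb) (inv_nonneg.2 hK)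
  have hlt := mean_lt_one_of_multiplier_pos ha hρa
  have := mul_pos (sub_pos.2 hab) (sub_pos.2 (hle.trans_lt hlt))
  rw [← multiplier_sub_multiplier ha hb hlam] at this
  linarith

lemma strictAntiOn_power (hK : 0 < K) (hlam : ∀ i, 0 ≤ lam i) (hpos : ∃ j, 0 < lam j) :
    StrictAntiOn (power K lam) {s | 0 < s ∧ 0 < multiplier K lam s} := by
  rintro a ⟨ha, hρa⟩ b ⟨hb, -⟩ hab
  obtain ⟨j, hj⟩ := hpos
  have hsq (i : ι) : (a + lam i) ^ 2 < (b + lam i) ^ 2 := by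
    have := hlam i
    gcongr
  have hN : K⁻¹ * ∑ i, lam i / (b + lam i) ^ 2 < K⁻¹ * ∑ i, lam i / (a + lam i) ^ 2 := by
    refine mul_lt_mul_of_pos_left (Finset.sum_lt_sum (fun i _ ↦ ?_) ⟨j, Finset.mem_univ j, ?_⟩)
      (inv_pos.2 hK)
    · have := hlam i
      exact div_le_div_of_nonneg_left (hlam i) (by positivity) (hsq i).le
    · exact div_lt_div_of_pos_left hj (by positivity) (hsq j)
  have hQ : K⁻¹ * ∑ i, lam i ^ 2 / (b + lam i) ^ 2 ≤ K⁻¹ * ∑ i, lam i ^ 2 / (a + lam i) ^ 2 := by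
    refine mul_le_mul_of_nonneg_left (Finset.sum_le_sum fun i _ ↦ ?_) (inv_nonneg.2 hK.le)
    have := hlam i
    exact div_le_div_of_nonneg_left (by positivity) (by positivity) (hsq i).le
  have hQa : K⁻¹ * ∑ i, lam i ^ 2 / (a + lam i) ^ 2 < 1 := by
    refine lt_of_le_of_lt (mul_le_mul_of_nonneg_left (Finset.sum_le_sum fun i _ ↦ ?_)
      (inv_nonneg.2 hK.le)) (mean_lt_one_of_multiplier_pos ha hρa)
    rw [sq (a + lam i)]
    exact sq_div_mul_le_div (hlam i) ha ha
  have hNa : 0 ≤ K⁻¹ * ∑ i, lam i / (a + lam i) ^ 2 :=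
    mul_nonneg (inv_nonneg.2 hK.le) (Finset.sum_nonneg fun i _ ↦ div_nonneg (hlam i) (sq_nonneg _))
  exact div_lt_div₀ hN (by linarith) hNa (by linarith)

lemma multiplier_eq_sub {s : ℝ} (hs : s ≠ 0) :
    multiplier K lam s = s - K⁻¹ * ∑ i, lam i / (1 + s⁻¹ * lam i) := by
  simp only [multiplier, div_one_add_inv_mul hs, ← Finset.mul_sum]
  ring

lemma power_eq {ρ a : ℝ} (hρ : ρ ≠ 0) (hs : ρ + a ≠ 0) :
    1 / ρ ^ 2 * ((1 / K * ∑ i, lam i / (1 + (ρ + a)⁻¹ * lam i) ^ 2) /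
      ((1 + 1 / ρ * a) ^ 2 - (1 / ρ) ^ 2 / K * ∑ i, lam i ^ 2 / (1 + (ρ + a)⁻¹ * lam i) ^ 2)) =
      power K lam (ρ + a) := by
  set s := ρ + a
  have hsum (f : ι → ℝ) :
      ∑ i, f i / (1 + s⁻¹ * lam i) ^ 2 = s ^ 2 * ∑ i, f i / (s + lam i) ^ 2 := by
    rw [Finset.mul_sum]
    refine Finset.sum_congr rfl fun i _ ↦ ?_
    rw [one_add_inv_mul hs, div_pow, div_div_eq_mul_div]
    ring
  have hden : (1 + 1 / ρ * a) ^ 2 - (1 / ρ) ^ 2 / K * (s ^ 2 * ∑ i, lam i ^ 2 / (s + lam i) ^ 2) =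
      (s / ρ) ^ 2 * (1 - K⁻¹ * ∑ i, lam i ^ 2 / (s + lam i) ^ 2) := by
    field_simp
    ring
  rw [hsum, hsum, hden, power, mul_div_mul_comm, ← mul_assoc, ← mul_div_assoc]
  congr 1
  field_simp

variable {n 𝕜 : Type*} [RCLike 𝕜] [Fintype n] [DecidableEq n] {R T : Matrix n n 𝕜}

lemma one_add_inv_mul_eigenvalues_pos (hR : R.PosSemidef) {s : ℝ} (hs : 0 < s) (i : n) :
    0 < 1 + s⁻¹ * hR.1.eigenvalues i := by
  have := hR.eigenvalues_nonneg i
  positivity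

lemma multiplier_eigenvalues_eq (hR : R.PosSemidef) {K ρ a : ℝ} (hρ : 0 < ρ) (ha : 0 ≤ a)
    (hfix : (a : 𝕜) = (K : 𝕜)⁻¹ * (R * (1 + ((1 / ρ / (1 + 1 / ρ * a) : ℝ) : 𝕜) • R)⁻¹).trace) :
    multiplier K hR.1.eigenvalues (ρ + a) = ρ := by
  have hs : 0 < ρ + a := by linarith
  rw [one_div_div_one_add_one_div_mul hρ.ne', hR.1.trace_mul_inv_one_add_smul_s13
    fun i ↦ (one_add_inv_mul_eigenvalues_pos hR hs i).ne'] at hfix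
  have hfix' : a = K⁻¹ * ∑ i, hR.1.eigenvalues i / (1 + (ρ + a)⁻¹ * hR.1.eigenvalues i) := by
    exact_mod_cast hfix
  rw [multiplier_eq_sub hs.ne', ← hfix']
  ring

lemma power_eigenvalues_eq (hR : R.PosSemidef) {K ρ a : ℝ} (hρ : 0 < ρ) (ha : 0 ≤ a)
    (hT : T = (1 + ((1 / ρ / (1 + 1 / ρ * a) : ℝ) : 𝕜) • R)⁻¹) :
    1 / ρ ^ 2 * ((1 / K * RCLike.re (R * T * T).trace) /
      ((1 + 1 / ρ * a) ^ 2 - (1 / ρ) ^ 2 / K * RCLike.re (R * T * R * T).trace)) =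
      power K hR.1.eigenvalues (ρ + a) := by
  have hs : 0 < ρ + a := by linarith
  have hpos := one_add_inv_mul_eigenvalues_pos hR hs
  rw [hT, one_div_div_one_add_one_div_mul hρ.ne',
    hR.1.trace_mul_inv_one_add_smul_mul_inv_one_add_smul fun i ↦ (hpos i).ne',
    hR.1.trace_mul_inv_one_add_smul_mul_mul_inv_one_add_smul fun i ↦ (hpos i).ne',
    RCLike.ofReal_re, RCLike.ofReal_re]
  exact power_eq hρ.ne' hs.ne'

end DetEquiv

/-- for `R` nonzero Hermitian positive semidefinite, with `α(t) ≥ 0` the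
solution of the fixed-point equation, `T(t) = (I_M + (t/(1+tα(t))) R)⁻¹` and
`β(t) = [(1/K) tr(R T(t)²)]/[(1+tα(t))² − (t²/K) tr(R T(t) R T(t))]`, the map
`ρ ↦ (1/ρ²) β(1/ρ)` is strictly decreasing on `(0,∞)`; hence for any `γ, P_a > 0` the
equation `(γ/ρ²) β(1/ρ) = P_a` has at most one solution `ρ > 0`. -/
theorem stmt13 {M : ℕ} (R : Matrix (Fin M) (Fin M) ℂ) (hR : R.PosSemidef) (hR0 : R ≠ 0)
    (K : ℕ) (hK : 1 ≤ K) (α : ℝ → ℝ)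
    (hα0 : ∀ t, 0 < t → 0 ≤ α t)
    (hfix : ∀ t, 0 < t → (α t : ℂ) = (K : ℂ)⁻¹ *
      (R * ((1 : Matrix (Fin M) (Fin M) ℂ) + ((t / (1 + t * α t) : ℝ) : ℂ) • R)⁻¹).trace)
    (T : ℝ → Matrix (Fin M) (Fin M) ℂ)
    (hT : ∀ t, T t = ((1 : Matrix (Fin M) (Fin M) ℂ) + ((t / (1 + t * α t) : ℝ) : ℂ) • R)⁻¹)
    (β : ℝ → ℝ)
    (hβ : ∀ t, β t = ((1 / K) * (R * T t * T t).trace.re) /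
      ((1 + t * α t) ^ 2 - (t ^ 2 / K) * (R * T t * R * T t).trace.re)) :
    StrictAntiOn (fun ρ : ℝ => (1 / ρ ^ 2) * β (1 / ρ)) (Set.Ioi 0) ∧
    ∀ γ Pa : ℝ, 0 < γ → 0 < Pa →
      ∀ ρ₁ ∈ Set.Ioi (0 : ℝ), ∀ ρ₂ ∈ Set.Ioi (0 : ℝ),
        (γ / ρ₁ ^ 2) * β (1 / ρ₁) = Pa → (γ / ρ₂ ^ 2) * β (1 / ρ₂) = Pa → ρ₁ = ρ₂ := by
  have hKpos : (0 : ℝ) < K := by exact_mod_cast hK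
  set lam := hR.1.eigenvalues
  have hlam : ∀ i, 0 ≤ lam i := hR.eigenvalues_nonneg
  have hα (ρ : ℝ) (hρ : 0 < ρ) : 0 ≤ α (1 / ρ) := hα0 _ (by positivity)
  have hmult (ρ : ℝ) (hρ : 0 < ρ) : DetEquiv.multiplier K lam (ρ + α (1 / ρ)) = ρ :=
    DetEquiv.multiplier_eigenvalues_eq hR hρ (hα ρ hρ) (by simpa using hfix (1 / ρ) (by positivity))
  have hpower (ρ : ℝ) (hρ : 0 < ρ) :
      1 / ρ ^ 2 * β (1 / ρ) = DetEquiv.power K lam (ρ + α (1 / ρ)) := by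
    rw [hβ]
    exact DetEquiv.power_eigenvalues_eq hR hρ (hα ρ hρ) (hT _)
  have hmem (ρ : ℝ) (hρ : 0 < ρ) :
      ρ + α (1 / ρ) ∈ {s | 0 < s ∧ 0 < DetEquiv.multiplier K lam s} :=
    ⟨by linarith [hα ρ hρ], (hmult ρ hρ).symm ▸ hρ⟩
  have hanti : StrictAntiOn (fun ρ : ℝ => (1 / ρ ^ 2) * β (1 / ρ)) (Set.Ioi 0) := by
    intro ρ₁ h₁ ρ₂ h₂ h12
    simp only [hpower ρ₁ h₁, hpower ρ₂ h₂]
    refine DetEquiv.strictAntiOn_power hKpos hlam (hR.exists_eigenvalues_pos hR0)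
      (hmem ρ₁ h₁) (hmem ρ₂ h₂) ?_
    rwa [← (DetEquiv.strictMonoOn_multiplier hKpos.le hlam).lt_iff_lt (hmem ρ₁ h₁) (hmem ρ₂ h₂),
      hmult ρ₁ h₁, hmult ρ₂ h₂]
  refine ⟨hanti, fun γ Pa hγ _ ρ₁ h₁ ρ₂ h₂ e₁ e₂ ↦ hanti.injOn h₁ h₂ (mul_left_cancel₀ hγ.ne' ?_)⟩
  simp only [← mul_assoc, mul_one_div, e₁, e₂]
end

section
/- Let R be an M×M Hermitian positive semidefinite complex matrix, K ≥ 1, σ² > 0, P_a > 0. Suppose α : (0, ∞) → [0, ∞) is differentiable and satisfies α(t) = (1/K)·trace( R·(I_M + (t/(1+tα(t)))·R)⁻¹ ) for all t > 0; define T(t) = (I_M + (t/(1+tα(t)))·R)⁻¹ and β(t) = [(1/K)·trace(R T(t)²)] / [(1 + tα(t))² − (t²/K)·trace(R T(t) R T(t))], and assume β is differentiable. Then the function g̃(ρ) = (σ²/(P_a ρ²))·β(1/ρ) + (1/K)·trace(T(1/ρ)) − (M − K)/K − (1/ρ)·β(1/ρ) is differentiable on (0, ∞) with derivative g̃′(ρ)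 = (−2σ²/(P_a ρ³) + 2/ρ²)·β(1/ρ) + (−σ²/(P_a ρ⁴) + 1/ρ³)·β′(1/ρ), and in particular g̃′(σ²/P_a) = 0. -/
/-!
Write `T(t) = (1 + u(t) R)⁻¹` with `u(t) = t / (1 + t α(t))`. Differentiating the resolvent gives
`T' = -u' T R T`, and differentiating the fixed-point equation `α = (1/K) tr (R T)` gives
`α' = -u' χ` with `χ = (1/K) tr (R T R T)`. Substituting this into `u' = (1 - t² α') / (1 + t α)²`
yields `u' ((1 + t α)² - t² χ) = 1`, hence `(1/K) (tr T)' = -u' (1/K) tr (R T²) = -β`.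
The formula for `g̃'` is then the chain rule for `t = 1/ρ`, and both of its coefficients carry the
factor `1 - σ² / (P_a ρ)`, which vanishes at `ρ = σ² / P_a`.
-/

open Matrix ComplexOrder

section MatrixCalculus

attribute [local instance] Matrix.linftyOpNormedRing Matrix.linftyOpNormedAlgebra

variable {n : Type*} [Fintype n] [DecidableEq n]

theorem Matrix.hasDerivAt_inv {𝕜 : Type*} [RCLike 𝕜] {A : ℝ → Matrix n n 𝕜}
    {A' : Matrix n n 𝕜} {t : ℝ} (hA : HasDerivAt A A' t) (hU : IsUnit (A t)) :
    HasDerivAt (fun s => (A s)⁻¹) (-((A t)⁻¹ * A' * (A t)⁻¹)) t := by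
  have h := hasFDerivAt_ringInverse (𝕜 := ℝ) hU.unit
  rw [hU.unit_spec] at h
  have h' := h.comp_hasDerivAt t hA
  simp only [Function.comp_def, coe_units_inv, hU.unit_spec, nonsing_inv_eq_ringInverse] at h' ⊢
  exact h'

theorem Matrix.PosSemidef.isUnit_one_add_smul {R : Matrix n n ℂ} (hR : R.PosSemidef) {r : ℝ}
    (hr : 0 ≤ r) : IsUnit (1 + (r : ℂ) • R) :=
  (PosDef.one.add_posSemidef (hR.smul (Complex.zero_le_real.mpr hr))).isUnit

theorem HasDerivAt.matrix_trace_re {A : ℝ → Matrix n n ℂ} {A' : Matrix n n ℂ} {t : ℝ}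
    (hA : HasDerivAt A A' t) : HasDerivAt (fun s => (A s).trace.re) A'.trace.re t :=
  (Complex.reCLM.comp (traceLinearMap n ℝ ℂ).toContinuousLinearMap).hasFDerivAt.comp_hasDerivAt t hA

theorem Matrix.PosSemidef.hasDerivAt_inv_one_add_smul {R : Matrix n n ℂ} (hR : R.PosSemidef)
    {u : ℝ → ℝ} {u' t : ℝ} (hu : HasDerivAt u u' t) (hu0 : 0 ≤ u t) :
    HasDerivAt (fun s => (1 + (u s : ℂ) • R)⁻¹)
      (-(u' : ℂ) • ((1 + (u t : ℂ) • R)⁻¹ * R * (1 + (u t : ℂ) • R)⁻¹)) t := by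
  convert Matrix.hasDerivAt_inv ((hu.ofReal_comp.smul_const R).const_add 1)
    (hR.isUnit_one_add_smul hu0) using 1
  rw [mul_smul_comm, smul_mul_assoc, neg_smul]

theorem hasDerivAt_div_one_add_mul {α : ℝ → ℝ} {a t : ℝ} (hα : HasDerivAt α a t)
    (h : 1 + t * α t ≠ 0) :
    HasDerivAt (fun s => s / (1 + s * α s)) ((1 - t ^ 2 * a) / (1 + t * α t) ^ 2) t := by
  refine ((hasDerivAt_id' t).div (((hasDerivAt_id' t).mul hα).const_add 1) h).congr_deriv ?_
  simp only [Pi.mul_apply]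
  field_simp
  ring

theorem Matrix.PosSemidef.hasDerivAt_trace_resolvent {R : Matrix n n ℂ} (hR : R.PosSemidef)
    {K : ℝ} {α β : ℝ → ℝ} {T : ℝ → Matrix n n ℂ} {t : ℝ} (ht : 0 ≤ t) (hα0 : 0 ≤ α t)
    (hα : DifferentiableAt ℝ α t)
    (hfix : ∀ᶠ s in nhds t, α s = 1 / K * (R * T s).trace.re)
    (hT : ∀ s, T s = (1 + ((s / (1 + s * α s) : ℝ) : ℂ) • R)⁻¹)
    (hβ : β t = (1 / K * (R * T t * T t).trace.re) /
      ((1 + t * α t) ^ 2 - (t ^ 2 / K) * (R * T t * R * T t).trace.re)) :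
    HasDerivAt (fun s => 1 / K * (T s).trace.re) (-β t) t := by
  set c := 1 + t * α t
  have hc : 0 < c := add_pos_of_pos_of_nonneg one_pos (mul_nonneg ht hα0)
  set u' := (1 - t ^ 2 * deriv α t) / c ^ 2
  have hTd : HasDerivAt T (-(u' : ℂ) • (T t * R * T t)) t := by
    have h := hR.hasDerivAt_inv_one_add_smul (hasDerivAt_div_one_add_mul hα.hasDerivAt hc.ne')
      (div_nonneg ht hc.le)
    rwa [← funext hT, ← hT t] at h
  set χ := 1 / K * (R * T t * R * T t).trace.re
  have hα' : deriv α t = -(u' * χ) := by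
    rw [(((hTd.const_mul R).matrix_trace_re.const_mul (1 / K)).congr_of_eventuallyEq hfix).deriv]
    have hassoc : R * (T t * R * T t) = R * T t * R * T t := by simp only [Matrix.mul_assoc]
    rw [mul_smul_comm, hassoc, trace_smul, smul_eq_mul, ← Complex.ofReal_neg, Complex.re_ofReal_mul]
    ring
  have hu'D : u' * (c ^ 2 - t ^ 2 * χ) = 1 := by
    have : u' * c ^ 2 = 1 - t ^ 2 * deriv α t := by simp only [u']; field_simp
    linear_combination this - t ^ 2 * hα'
  have hβt : β t = u' * (1 / K * (R * T t * T t).trace.re) := by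
    have hD : c ^ 2 - t ^ 2 / K * (R * T t * R * T t).trace.re = c ^ 2 - t ^ 2 * χ := by ring
    rw [hβ, hD, div_eq_iff (right_ne_zero_of_mul_eq_one hu'D)]
    linear_combination (-(1 / K * (R * T t * T t).trace.re)) * hu'D
  refine (hTd.matrix_trace_re.const_mul (1 / K)).congr_deriv ?_
  rw [hβt, trace_smul, trace_mul_cycle R (T t) (T t), smul_eq_mul,
    ← Complex.ofReal_neg, Complex.re_ofReal_mul]
  ring

end MatrixCalculus

theorem hasDerivAt_gTilde {β τ : ℝ → ℝ} {σ2 Pa C ρ : ℝ} (hPa : Pa ≠ 0) (hρ : ρ ≠ 0)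
    (hτ : HasDerivAt τ (-β (1 / ρ)) (1 / ρ)) (hβ : DifferentiableAt ℝ β (1 / ρ)) :
    HasDerivAt (fun ρ => σ2 / (Pa * ρ ^ 2) * β (1 / ρ) + τ (1 / ρ) - C - 1 / ρ * β (1 / ρ))
      ((-2 * σ2 / (Pa * ρ ^ 3) + 2 / ρ ^ 2) * β (1 / ρ) +
        (-σ2 / (Pa * ρ ^ 4) + 1 / ρ ^ 3) * deriv β (1 / ρ)) ρ := by
  have hinv : HasDerivAt (fun x : ℝ => 1 / x) (-(1 / ρ ^ 2)) ρ := by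
    simpa only [one_div] using hasDerivAt_inv hρ
  have hβinv := hβ.hasDerivAt.comp ρ hinv
  have hcoef := (hasDerivAt_const ρ σ2).div ((hasDerivAt_pow 2 ρ).const_mul Pa)
    (mul_ne_zero hPa (pow_ne_zero 2 hρ))
  refine ((((hcoef.mul hβinv).add (hτ.comp ρ hinv)).sub_const C).sub
    (hinv.mul hβinv)).congr_deriv ?_
  simp only [Function.comp_apply, Pi.div_apply]
  field_simp
  ring

theorem stmt14_general {M : ℕ} (R : Matrix (Fin M) (Fin M) ℂ) (hR : R.PosSemidef)
    (K : ℕ) (σ2 Pa : ℝ) (hσ2 : 0 < σ2) (hPa : 0 < Pa)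
    (α : ℝ → ℝ)
    (hα0 : ∀ t, 0 < t → 0 ≤ α t)
    (hαdiff : ∀ t, 0 < t → DifferentiableAt ℝ α t)
    (hfix : ∀ t, 0 < t → (α t : ℂ) = (K : ℂ)⁻¹ *
      (R * ((1 : Matrix (Fin M) (Fin M) ℂ) + ((t / (1 + t * α t) : ℝ) : ℂ) • R)⁻¹).trace)
    (T : ℝ → Matrix (Fin M) (Fin M) ℂ)
    (hT : ∀ t, T t = ((1 : Matrix (Fin M) (Fin M) ℂ) + ((t / (1 + t * α t) : ℝ) : ℂ) • R)⁻¹)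
    (β : ℝ → ℝ)
    (hβ : ∀ t, β t = ((1 / K) * (R * T t * T t).trace.re) /
      ((1 + t * α t) ^ 2 - (t ^ 2 / K) * (R * T t * R * T t).trace.re))
    (hβdiff : ∀ t, 0 < t → DifferentiableAt ℝ β t)
    (gTilde : ℝ → ℝ)
    (hg : ∀ ρ, gTilde ρ = (σ2 / (Pa * ρ ^ 2)) * β (1 / ρ) + (1 / K) * (T (1 / ρ)).trace.re -
      ((M : ℝ) - (K : ℝ)) / K - (1 / ρ) * β (1 / ρ)) :
    (∀ ρ, 0 < ρ → HasDerivAt gTilde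
      ((-2 * σ2 / (Pa * ρ ^ 3) + 2 / ρ ^ 2) * β (1 / ρ) +
        (-σ2 / (Pa * ρ ^ 4) + 1 / ρ ^ 3) * deriv β (1 / ρ)) ρ) ∧
    deriv gTilde (σ2 / Pa) = 0 := by
  have hfix_re : ∀ t, 0 < t → α t = 1 / K * (R * T t).trace.re := fun t ht => by
    simpa [hT t] using congrArg Complex.re (hfix t ht)
  have hτ : ∀ t, 0 < t → HasDerivAt (fun s => 1 / (K : ℝ) * (T s).trace.re) (-β t) t :=
    fun t ht => hR.hasDerivAt_trace_resolvent ht.le (hα0 t ht) (hαdiff t ht)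
      (Filter.eventually_of_mem (Ioi_mem_nhds ht) hfix_re) hT (hβ t)
  have hderiv : ∀ ρ, 0 < ρ → HasDerivAt gTilde
      ((-2 * σ2 / (Pa * ρ ^ 3) + 2 / ρ ^ 2) * β (1 / ρ) +
        (-σ2 / (Pa * ρ ^ 4) + 1 / ρ ^ 3) * deriv β (1 / ρ)) ρ := fun ρ hρ => by
    rw [funext hg]
    exact hasDerivAt_gTilde hPa.ne' hρ.ne' (hτ _ (one_div_pos.mpr hρ))
      (hβdiff _ (one_div_pos.mpr hρ))
  refine ⟨hderiv, ?_⟩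
  rw [(hderiv _ (div_pos hσ2 hPa)).deriv]
  field_simp
  ring

/-- with `α` differentiable solving the fixed-point equation,
`T(t) = (I_M + (t/(1+tα(t))) R)⁻¹`,
`β(t) = [(1/K) tr(R T(t)²)]/[(1+tα(t))² − (t²/K) tr(R T(t) R T(t))]` assumed
differentiable, the function
`g̃(ρ) = (σ²/(P_a ρ²)) β(1/ρ) + (1/K) tr(T(1/ρ)) − (M−K)/K − (1/ρ) β(1/ρ)`
is differentiable on `(0,∞)` with derivative
`g̃′(ρ) = (−2σ²/(P_a ρ³) + 2/ρ²) β(1/ρ) + (−σ²/(P_a ρ⁴) + 1/ρ³) β′(1/ρ)`,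
and in particular `g̃′(σ²/P_a) = 0`. -/
theorem stmt14 {M : ℕ} (R : Matrix (Fin M) (Fin M) ℂ) (hR : R.PosSemidef)
    (K : ℕ) (hK : 1 ≤ K) (σ2 Pa : ℝ) (hσ2 : 0 < σ2) (hPa : 0 < Pa)
    (α : ℝ → ℝ)
    (hα0 : ∀ t, 0 < t → 0 ≤ α t)
    (hαdiff : ∀ t, 0 < t → DifferentiableAt ℝ α t)
    (hfix : ∀ t, 0 < t → (α t : ℂ) = (K : ℂ)⁻¹ *
      (R * ((1 : Matrix (Fin M) (Fin M) ℂ) + ((t / (1 + t * α t) : ℝ) : ℂ) • R)⁻¹).trace)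
    (T : ℝ → Matrix (Fin M) (Fin M) ℂ)
    (hT : ∀ t, T t = ((1 : Matrix (Fin M) (Fin M) ℂ) + ((t / (1 + t * α t) : ℝ) : ℂ) • R)⁻¹)
    (β : ℝ → ℝ)
    (hβ : ∀ t, β t = ((1 / K) * (R * T t * T t).trace.re) /
      ((1 + t * α t) ^ 2 - (t ^ 2 / K) * (R * T t * R * T t).trace.re))
    (hβdiff : ∀ t, 0 < t → DifferentiableAt ℝ β t)
    (gTilde : ℝ → ℝ)
    (hg : ∀ ρ, gTilde ρ = (σ2 / (Pa * ρ ^ 2)) * β (1 / ρ) + (1 / K) * (T (1 / ρ)).trace.re -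
      ((M : ℝ) - (K : ℝ)) / K - (1 / ρ) * β (1 / ρ)) :
    (∀ ρ, 0 < ρ → HasDerivAt gTilde
      ((-2 * σ2 / (Pa * ρ ^ 3) + 2 / ρ ^ 2) * β (1 / ρ) +
        (-σ2 / (Pa * ρ ^ 4) + 1 / ρ ^ 3) * deriv β (1 / ρ)) ρ) ∧
    deriv gTilde (σ2 / Pa) = 0 :=
  stmt14_general R hR K σ2 Pa hσ2 hPa α hα0 hαdiff hfix T hT β hβ hβdiff gTilde hg
end
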